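/- arXiv:1403.4500 — 8 statements merged into one kernel-verified Lean document; each statement's English description precedes it below -/
import Mathlib

section
/- Let (X,(φ_t)_{t∈[0,T]}) be a compatible pair. Then for all u, v ∈ L²_X the map t ↦ (u(t), v(t))_{X(t)} is integrable on [0,T] and (u,v)_{L²_X} := ∫₀ᵀ (u(t), v(t))_{X(t)} dt defines an inner product on L²_X; likewise, for all f, g ∈ L²_{X*} the map t ↦ (f(t), g(t))_{X(t)*} is integrable on [0,T] and (f,g)_{L²_{X*}} := ∫₀ᵀ (f(t), g(t))_{X(t)*} dt defines an inner product on L²_{X*}. -/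
open MeasureTheory Set Filter Topology

noncomputable section

/-- A compatible pair `(X, (φ_t))` in the sense of Alphonse–Elliott–Stinner:
for each `t`, `X t` is a real (separable, complete: imposed as instance assumptions
where needed) inner product space, `φ t : X 0 ≃L[ℝ] X t` with `φ 0 = id`,
uniformly bounded together with its inverse on `[0,T]`, and `t ↦ ‖φ t u‖` continuous. -/
structure CompatiblePair (T : ℝ) (X : ℝ → Type*) [∀ t, NormedAddCommGroup (X t)]
    [∀ t, InnerProductSpace ℝ (X t)] where
  φ : ∀ t : ℝ, X 0 ≃L[ℝ] X t
  φ_zero : φ 0 = ContinuousLinearEquiv.refl ℝ (X 0)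
  C : ℝ
  C_pos : 0 < C
  norm_map_le : ∀ t ∈ Icc (0:ℝ) T, ∀ u : X 0, ‖φ t u‖ ≤ C * ‖u‖
  norm_symm_le : ∀ t ∈ Icc (0:ℝ) T, ∀ v : X t, ‖(φ t).symm v‖ ≤ C * ‖v‖
  continuous_norm : ∀ u : X 0, ContinuousOn (fun t => ‖φ t u‖) (Icc (0:ℝ) T)

variable {T : ℝ} {X : ℝ → Type*} [∀ t, NormedAddCommGroup (X t)]
  [∀ t, InnerProductSpace ℝ (X t)]

/-- Membership in `L²_X`: the pullback `t ↦ φ_{-t} u(t)` lies in `L²(0,T;X₀)`. -/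
def CompatiblePair.MemL2X (P : CompatiblePair T X) (u : ∀ t, X t) : Prop :=
  MemLp (fun t => (P.φ t).symm (u t)) 2 (volume.restrict (Ioc (0:ℝ) T))

/-- The dual operator `φ_t^* : X(t)* → X₀*`. -/
def CompatiblePair.pullDual (P : CompatiblePair T X) (t : ℝ) (f : StrongDual ℝ (X t)) :
    StrongDual ℝ (X 0) :=
  f.comp (P.φ t : X 0 →L[ℝ] X t)

/-- The inverse dual operator `φ_{-t}^* : X₀* → X(t)*`. -/
def CompatiblePair.pushDual (P : CompatiblePair T X) (t : ℝ) (f : StrongDual ℝ (X 0)) :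
    StrongDual ℝ (X t) :=
  f.comp ((P.φ t).symm : X t →L[ℝ] X 0)

/-- Membership in `L²_{X*}`: the pullback `t ↦ φ_t^* f(t)` lies in `L²(0,T;X₀*)`. -/
def CompatiblePair.MemL2Xstar (P : CompatiblePair T X) (f : ∀ t, StrongDual ℝ (X t)) :
    Prop :=
  MemLp (fun t => P.pullDual t (f t)) 2 (volume.restrict (Ioc (0:ℝ) T))

/-- The inner product on the dual of a real Hilbert space, via the Riesz isometry. -/
def dualInner {E : Type*} [NormedAddCommGroup E] [InnerProductSpace ℝ E] [CompleteSpace E]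
    (f g : StrongDual ℝ E) : ℝ :=
  inner ℝ ((InnerProductSpace.toDual ℝ E).symm f) ((InnerProductSpace.toDual ℝ E).symm g)

/-!
Write `u(t) = φ_t u'(t)` with `u' ∈ L²(0,T;X₀)`. Then
`(u(t), v(t))_{X(t)} = (S_t u'(t), v'(t))_{X₀}` for the Gram operators `S_t = φ_t^* φ_t`,
and dually `(f(t), g(t))_{X(t)*} = (S_t⁻¹ a(t), b(t))_{X₀}`, where `a(t), b(t)` are the Riesz
representatives of `φ_t^* f(t), φ_t^* g(t)`. On `[0,T]` these operators are bounded by `C²` and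
`S_t` is coercive with constant `C⁻²`, so everything reduces to the measurability of
`t ↦ S_t c` and `t ↦ S_t⁻¹ c`. The first is weakly continuous (polarize the continuous norms
`‖φ_t c‖`), hence strongly measurable by Pettis' theorem; the second is the limit of a
fixed-point iteration that contracts uniformly in `t`. The inner product axioms then hold
pointwise and pass to the integral.
-/

open scoped InnerProductSpace InnerProduct

section Measurability

variable {α E : Type*} [MeasurableSpace α]

/-- By Lusin–Souslin, `x ↦ (ℓ n x)ₙ` is a measurable embedding. -/
theorem measurable_of_forall_measurable_comp_of_injective
    [TopologicalSpace E] [PolishSpace E] [MeasurableSpace E] [BorelSpace E]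
    {ℓ : ℕ → E → ℝ} (hℓ : ∀ n, Continuous (ℓ n)) (hinj : Function.Injective fun x n => ℓ n x)
    {v : α → E} (hv : ∀ n, Measurable fun a => ℓ n (v a)) : Measurable v :=
  ((continuous_pi hℓ).measurableEmbedding hinj).measurable_comp_iff.1
    (measurable_pi_lambda _ hv)

theorem MeasureTheory.StronglyMeasurable.clm_apply_of_forall {F : Type*}
    [NormedAddCommGroup E] [NormedSpace ℝ E] [NormedAddCommGroup F] [NormedSpace ℝ F]
    [TopologicalSpace.SeparableSpace F] {S : α → E →L[ℝ] F}
    (hS : ∀ b, StronglyMeasurable fun a => S a b) {v : α → E} (hv : StronglyMeasurable v) :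
    StronglyMeasurable fun a => S a (v a) := by
  borelize F
  have : SecondCountableTopology F := UniformSpace.secondCountable_of_separable F
  have happrox : ∀ n, StronglyMeasurable fun a => S a (hv.approx n a) := fun n =>
    (SimpleFunc.measurable_bind (hv.approx n) (fun c a => S a c)
      fun c => (hS c).measurable).stronglyMeasurable
  exact stronglyMeasurable_of_tendsto atTop happrox (tendsto_pi_nhds.2 fun a =>
    ((S a).continuous.tendsto (v a)).comp (hv.tendsto_approx a))

variable [NormedAddCommGroup E] [InnerProductSpace ℝ E]

/-- Pettis' theorem, for separable Hilbert spaces. -/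
theorem stronglyMeasurable_of_forall_inner [CompleteSpace E]
    [TopologicalSpace.SeparableSpace E] {v : α → E}
    (hv : ∀ c : E, Measurable fun a => ⟪v a, c⟫_ℝ) : StronglyMeasurable v := by
  borelize E
  have : SecondCountableTopology E := UniformSpace.secondCountable_of_separable E
  obtain ⟨e, he⟩ := TopologicalSpace.exists_dense_seq E
  refine (measurable_of_forall_measurable_comp_of_injective (ℓ := fun n x => ⟪x, e n⟫_ℝ)
    (fun n => continuous_id.inner continuous_const)
    (fun x y hxy => ext_inner_right ℝ fun z => ?_) fun n => hv (e n)).stronglyMeasurable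
  exact congrFun (he.equalizer (continuous_const.inner continuous_id)
    (continuous_const.inner continuous_id) (funext (congrFun hxy))) z

theorem norm_sub_smul_apply_le_of_coercive {S : E →L[ℝ] E} {K m : ℝ} (hm : 0 < m)
    (hK0 : 0 < K) (hK : ∀ x, ‖S x‖ ≤ K * ‖x‖) (hcoer : ∀ x, m * ‖x‖ ^ 2 ≤ ⟪S x, x⟫_ℝ) (x : E) :
    ‖x - (m / K ^ 2) • S x‖ ≤ √(1 - m ^ 2 / K ^ 2) * ‖x‖ := by
  set c := m / K ^ 2
  have hcK : c * K ^ 2 = m := div_mul_cancel₀ m (by positivity)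
  have hsq : ‖x - c • S x‖ ^ 2 ≤ (1 - m ^ 2 / K ^ 2) * ‖x‖ ^ 2 := by
    have hSx : c ^ 2 * ‖S x‖ ^ 2 ≤ c * m * ‖x‖ ^ 2 := by
      calc c ^ 2 * ‖S x‖ ^ 2 ≤ c ^ 2 * (K * ‖x‖) ^ 2 := by gcongr; exact hK x
        _ = c * m * ‖x‖ ^ 2 := by rw [← hcK]; ring
    have hinner : c * (m * ‖x‖ ^ 2) ≤ c * ⟪S x, x⟫_ℝ := by gcongr; exact hcoer x
    have hm2 : m ^ 2 / K ^ 2 = c * m := by ring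
    rw [norm_sub_sq_real, inner_smul_right, real_inner_comm, norm_smul, mul_pow,
      Real.norm_eq_abs, sq_abs, hm2]
    linarith
  calc ‖x - c • S x‖ = √(‖x - c • S x‖ ^ 2) := (Real.sqrt_sq (norm_nonneg _)).symm
    _ ≤ √((1 - m ^ 2 / K ^ 2) * ‖x‖ ^ 2) := Real.sqrt_le_sqrt hsq
    _ = √(1 - m ^ 2 / K ^ 2) * ‖x‖ := by
      rw [Real.sqrt_mul' _ (sq_nonneg _), Real.sqrt_sq (norm_nonneg _)]

/-- `R a b` is the limit of the iteration `y ↦ y - (m / K²) • (S a y - b)` started at `0`,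
which contracts uniformly in `a` with ratio `√(1 - m² / K²)`. -/
theorem stronglyMeasurable_apply_of_rightInverse [TopologicalSpace.SeparableSpace E]
    {S : α → E →L[ℝ] E} {R : α → E → E} {K m : ℝ} (hm : 0 < m) (hK0 : 0 < K)
    (hK : ∀ a x, ‖S a x‖ ≤ K * ‖x‖) (hcoer : ∀ a x, m * ‖x‖ ^ 2 ≤ ⟪S a x, x⟫_ℝ)
    (hS : ∀ b, StronglyMeasurable fun a => S a b) (hSR : ∀ a b, S a (R a b) = b) (b : E) :
    StronglyMeasurable fun a => R a b := by
  set q := √(1 - m ^ 2 / K ^ 2)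
  have hq : q < 1 := by
    have : 0 < m ^ 2 / K ^ 2 := by positivity
    exact (Real.sqrt_lt' one_pos).2 (by linarith)
  set step : α → E → E := fun a y => y - (m / K ^ 2) • (S a y - b)
  have hmeas : ∀ n, StronglyMeasurable fun a => (step a)^[n] 0 := by
    intro n
    induction n with
    | zero => exact stronglyMeasurable_const
    | succ n ih =>
      simp only [Function.iterate_succ_apply']
      exact ih.sub (((ih.clm_apply_of_forall hS).sub stronglyMeasurable_const).const_smul _)
  have herr : ∀ a n, ‖(step a)^[n] 0 - R a b‖ ≤ q ^ n * ‖R a b‖ := by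
    intro a n
    induction n with
    | zero => simp
    | succ n ih =>
      have hstep : ∀ y, step a y - R a b = (y - R a b) - (m / K ^ 2) • S a (y - R a b) := by
        intro y
        simp only [step, map_sub, hSR]
        abel
      rw [Function.iterate_succ_apply', hstep]
      calc _ ≤ q * ‖(step a)^[n] 0 - R a b‖ :=
            norm_sub_smul_apply_le_of_coercive hm hK0 (hK a) (hcoer a) _
        _ ≤ q * (q ^ n * ‖R a b‖) := by gcongr
        _ = _ := by ring
  refine stronglyMeasurable_of_tendsto atTop hmeas (tendsto_pi_nhds.2 fun a => ?_)
  rw [tendsto_iff_norm_sub_tendsto_zero]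
  refine squeeze_zero (fun n => norm_nonneg _) (herr a) ?_
  simpa using
    (tendsto_pow_atTop_nhds_zero_of_lt_one (Real.sqrt_nonneg _) hq).mul_const ‖R a b‖

end Measurability

section IntegralInner

variable {α : Type*} [MeasurableSpace α] {μ : Measure α}

theorem integrable_inner_clm_apply {E : Type*} [NormedAddCommGroup E] [InnerProductSpace ℝ E]
    [TopologicalSpace.SeparableSpace E] {A : α → E →L[ℝ] E} {K : ℝ}
    (hA : ∀ b, StronglyMeasurable fun a => A a b) (hK : ∀ a, ‖A a‖ ≤ K) {u v : α → E}
    (hu : MemLp u 2 μ) (hv : MemLp v 2 μ) : Integrable (fun a => ⟪A a (u a), v a⟫_ℝ) μ := by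
  have hAu_meas : AEStronglyMeasurable (fun a => A a (u a)) μ :=
    ⟨_, hu.1.stronglyMeasurable_mk.clm_apply_of_forall hA,
      by filter_upwards [hu.1.ae_eq_mk] with a ha; rw [ha]⟩
  have hAu : MemLp (fun a => A a (u a)) 2 μ :=
    hu.of_le_mul hAu_meas (ae_of_all _ fun a => (A a).le_of_opNorm_le (hK a) _)
  exact (hAu.norm.integrable_mul hv.norm).mono' (hAu.1.inner hv.1)
    (ae_of_all _ fun a => norm_inner_le_norm _ _)

theorem integral_inner_isInnerProduct {Y : α → Type*} [∀ a, NormedAddCommGroup (Y a)]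
    [∀ a, InnerProductSpace ℝ (Y a)] {M : (∀ a, Y a) → Prop}
    (hint : ∀ u v, M u → M v → Integrable (fun a => ⟪u a, v a⟫_ℝ) μ) :
    (∀ u v : ∀ a, Y a, M u → M v →
        ∫ a, ⟪u a, v a⟫_ℝ ∂μ = ∫ a, ⟪v a, u a⟫_ℝ ∂μ) ∧
    (∀ u₁ u₂ v : ∀ a, Y a, M u₁ → M u₂ → M v →
        ∫ a, ⟪u₁ a + u₂ a, v a⟫_ℝ ∂μ = ∫ a, ⟪u₁ a, v a⟫_ℝ ∂μ + ∫ a, ⟪u₂ a, v a⟫_ℝ ∂μ) ∧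
    (∀ (c : ℝ) (u v : ∀ a, Y a), M u → M v →
        ∫ a, ⟪c • u a, v a⟫_ℝ ∂μ = c * ∫ a, ⟪u a, v a⟫_ℝ ∂μ) ∧
    (∀ u : ∀ a, Y a, M u → 0 ≤ ∫ a, ⟪u a, u a⟫_ℝ ∂μ) ∧
    (∀ u : ∀ a, Y a, M u → ∫ a, ⟪u a, u a⟫_ℝ ∂μ = 0 → ∀ᵐ a ∂μ, u a = 0) := by
  refine ⟨fun u v _ _ => ?_, fun u₁ u₂ v h₁ h₂ hv => ?_, fun c u v _ _ => ?_,
    fun u _ => integral_nonneg fun _ => real_inner_self_nonneg, fun u hu h0 => ?_⟩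
  · simp_rw [real_inner_comm]
  · simp_rw [inner_add_left]
    exact integral_add (hint u₁ v h₁ hv) (hint u₂ v h₂ hv)
  · simp_rw [real_inner_smul_left]
    exact integral_const_mul c _
  · filter_upwards [(integral_eq_zero_iff_of_nonneg (fun _ => real_inner_self_nonneg)
      (hint u u hu hu)).1 h0] with a ha
    exact inner_self_eq_zero.1 ha

end IntegralInner

instance StrongDual.instInnerProductSpace {E : Type*} [NormedAddCommGroup E]
    [InnerProductSpace ℝ E] [CompleteSpace E] : InnerProductSpace ℝ (StrongDual ℝ E) where
  inner := dualInner
  norm_sq_eq_re_inner f := by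
    simp only [dualInner, RCLike.re_to_real, real_inner_self_eq_norm_sq,
      LinearIsometryEquiv.norm_map]
  conj_inner_symm f g := real_inner_comm _ _
  add_left f₁ f₂ g := by simp only [dualInner, map_add, inner_add_left]
  smul_left c f g := by simp only [dualInner, map_smul, real_inner_smul_left]; rfl

namespace CompatiblePair

variable [∀ t, CompleteSpace (X t)] (P : CompatiblePair T X)

def gram (t : ℝ) : X 0 →L[ℝ] X 0 :=
  (P.φ t : X 0 →L[ℝ] X t)† ∘L (P.φ t : X 0 →L[ℝ] X t)

def gramInv (t : ℝ) : X 0 →L[ℝ] X 0 :=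
  ((P.φ t).symm : X t →L[ℝ] X 0) ∘L ((P.φ t).symm : X t →L[ℝ] X 0)†

theorem inner_gram_apply (t : ℝ) (a c : X 0) : ⟪P.gram t a, c⟫_ℝ = ⟪P.φ t a, P.φ t c⟫_ℝ := by
  simp [gram, ContinuousLinearMap.adjoint_inner_left]

theorem gram_gramInv_apply (t : ℝ) (c : X 0) : P.gram t (P.gramInv t c) = c := by
  refine ext_inner_right ℝ fun z => ?_
  rw [inner_gram_apply, gramInv, ContinuousLinearMap.comp_apply, ContinuousLinearEquiv.coe_coe,
    ContinuousLinearEquiv.apply_symm_apply, ContinuousLinearMap.adjoint_inner_left]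
  simp

theorem norm_gram_le {t : ℝ} (ht : t ∈ Icc 0 T) : ‖P.gram t‖ ≤ P.C ^ 2 := by
  rw [gram, ContinuousLinearMap.norm_adjoint_comp_self, ← sq]
  exact pow_le_pow_left₀ (norm_nonneg _)
    (ContinuousLinearMap.opNorm_le_bound _ P.C_pos.le (P.norm_map_le t ht)) 2

theorem norm_gramInv_le {t : ℝ} (ht : t ∈ Icc 0 T) : ‖P.gramInv t‖ ≤ P.C ^ 2 := by
  have hψ : ‖((P.φ t).symm : X t →L[ℝ] X 0)‖ ≤ P.C :=
    ContinuousLinearMap.opNorm_le_bound _ P.C_pos.le (P.norm_symm_le t ht)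
  calc ‖P.gramInv t‖
      ≤ ‖((P.φ t).symm : X t →L[ℝ] X 0)‖ * ‖((P.φ t).symm : X t →L[ℝ] X 0)†‖ :=
        ContinuousLinearMap.opNorm_comp_le _ _
    _ ≤ P.C * P.C := by
        rw [LinearIsometryEquiv.norm_map]
        exact mul_le_mul hψ hψ (norm_nonneg _) P.C_pos.le
    _ = P.C ^ 2 := (sq _).symm

theorem inv_sq_mul_sq_norm_le_inner_gram {t : ℝ} (ht : t ∈ Icc 0 T) (x : X 0) :
    (P.C ^ 2)⁻¹ * ‖x‖ ^ 2 ≤ ⟪P.gram t x, x⟫_ℝ := by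
  have hx : ‖x‖ ≤ P.C * ‖P.φ t x‖ := by
    simpa using P.norm_symm_le t ht (P.φ t x)
  have hC := P.C_pos
  rw [inner_gram_apply, real_inner_self_eq_norm_sq, inv_mul_le_iff₀ (by positivity), ← mul_pow]
  exact pow_le_pow_left₀ (norm_nonneg _) hx 2

theorem continuousOn_inner_gram (a c : X 0) :
    ContinuousOn (fun t => ⟪P.gram t a, c⟫_ℝ) (Icc 0 T) := by
  simp_rw [inner_gram_apply,
    real_inner_eq_norm_add_mul_self_sub_norm_mul_self_sub_norm_mul_self_div_two, ← map_add]
  have := P.continuous_norm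
  exact ((((this _).mul (this _)).sub ((this _).mul (this _))).sub
    ((this _).mul (this _))).div_const 2

theorem inner_eq_inner_gram (t : ℝ) (u v : X t) :
    ⟪u, v⟫_ℝ = ⟪P.gram t ((P.φ t).symm u), (P.φ t).symm v⟫_ℝ := by
  simp [inner_gram_apply]

theorem toDual_symm_eq_adjoint (t : ℝ) (f : StrongDual ℝ (X t)) :
    (InnerProductSpace.toDual ℝ (X t)).symm f =
      (((P.φ t).symm : X t →L[ℝ] X 0)†)
        ((InnerProductSpace.toDual ℝ (X 0)).symm (P.pullDual t f)) := by
  refine ext_inner_right ℝ fun z => ?_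
  rw [InnerProductSpace.toDual_symm_apply, ContinuousLinearMap.adjoint_inner_left,
    InnerProductSpace.toDual_symm_apply]
  simp [pullDual]

theorem inner_dual_eq_inner_gramInv (t : ℝ) (f g : StrongDual ℝ (X t)) :
    ⟪f, g⟫_ℝ = ⟪P.gramInv t ((InnerProductSpace.toDual ℝ (X 0)).symm (P.pullDual t f)),
      (InnerProductSpace.toDual ℝ (X 0)).symm (P.pullDual t g)⟫_ℝ := by
  change dualInner f g = _
  rw [dualInner, P.toDual_symm_eq_adjoint t f, P.toDual_symm_eq_adjoint t g,
    ContinuousLinearMap.adjoint_inner_right]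
  rfl

variable [TopologicalSpace.SeparableSpace (X 0)]

theorem stronglyMeasurable_gram_projIcc (hT : 0 ≤ T) (c : X 0) :
    StronglyMeasurable fun t => P.gram (projIcc 0 T hT t) c :=
  stronglyMeasurable_of_forall_inner fun z =>
    ((P.continuousOn_inner_gram c z).comp_continuous
      (continuous_subtype_val.comp continuous_projIcc) fun t => (projIcc 0 T hT t).2).measurable

theorem stronglyMeasurable_gramInv_projIcc (hT : 0 ≤ T) (c : X 0) :
    StronglyMeasurable fun t => P.gramInv (projIcc 0 T hT t) c := by
  have hC := P.C_pos
  exact stronglyMeasurable_apply_of_rightInverse (K := P.C ^ 2) (by positivity) (by positivity)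
    (fun t => (P.gram _).le_of_opNorm_le (P.norm_gram_le (projIcc 0 T hT t).2))
    (fun t => P.inv_sq_mul_sq_norm_le_inner_gram (projIcc 0 T hT t).2)
    (P.stronglyMeasurable_gram_projIcc hT) (fun t => P.gram_gramInv_apply _) c

theorem integrableOn_inner (hT : 0 ≤ T) {u v : ∀ t, X t} (hu : P.MemL2X u)
    (hv : P.MemL2X v) :
    IntegrableOn (fun t => ⟪u t, v t⟫_ℝ) (Ioc 0 T) := by
  refine (integrable_inner_clm_apply (P.stronglyMeasurable_gram_projIcc hT)
    (fun t => P.norm_gram_le (projIcc 0 T hT t).2) hu hv).congr ?_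
  filter_upwards [ae_restrict_mem measurableSet_Ioc] with t ht
  rw [projIcc_of_mem _ (Ioc_subset_Icc_self ht), P.inner_eq_inner_gram t (u t) (v t)]

theorem integrableOn_inner_dual (hT : 0 ≤ T) {f g : ∀ t, StrongDual ℝ (X t)}
    (hf : P.MemL2Xstar f) (hg : P.MemL2Xstar g) :
    IntegrableOn (fun t => ⟪f t, g t⟫_ℝ) (Ioc 0 T) := by
  let riesz : StrongDual ℝ (X 0) →L[ℝ] X 0 :=
    (InnerProductSpace.toDual ℝ (X 0)).symm.toContinuousLinearEquiv.toContinuousLinearMap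
  refine (integrable_inner_clm_apply (P.stronglyMeasurable_gramInv_projIcc hT)
    (fun t => P.norm_gramInv_le (projIcc 0 T hT t).2) (riesz.comp_memLp' hf)
    (riesz.comp_memLp' hg)).congr ?_
  filter_upwards [ae_restrict_mem measurableSet_Ioc] with t ht
  rw [projIcc_of_mem _ (Ioc_subset_Icc_self ht), inner_dual_eq_inner_gramInv]
  rfl

end CompatiblePair

theorem stmt0 (T : ℝ) (hT : 0 < T) (X : ℝ → Type*) [∀ t, NormedAddCommGroup (X t)]
    [∀ t, InnerProductSpace ℝ (X t)] [∀ t, CompleteSpace (X t)]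
    [∀ t, TopologicalSpace.SeparableSpace (X t)] (P : CompatiblePair T X) :
    -- the pairing `t ↦ (u(t), v(t))_{X(t)}` is integrable on `[0,T]`
    ((∀ u v : ∀ t, X t, P.MemL2X u → P.MemL2X v →
        IntegrableOn (fun t => (inner ℝ (u t) (v t) : ℝ)) (Ioc 0 T)) ∧
     -- symmetry
     (∀ u v : ∀ t, X t, P.MemL2X u → P.MemL2X v →
        (∫ t in Ioc (0:ℝ) T, (inner ℝ (u t) (v t) : ℝ))
          = ∫ t in Ioc (0:ℝ) T, (inner ℝ (v t) (u t) : ℝ)) ∧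
     -- additivity in the first argument
     (∀ u₁ u₂ v : ∀ t, X t, P.MemL2X u₁ → P.MemL2X u₂ → P.MemL2X v →
        (∫ t in Ioc (0:ℝ) T, (inner ℝ (u₁ t + u₂ t) (v t) : ℝ))
          = (∫ t in Ioc (0:ℝ) T, (inner ℝ (u₁ t) (v t) : ℝ))
            + ∫ t in Ioc (0:ℝ) T, (inner ℝ (u₂ t) (v t) : ℝ)) ∧
     -- homogeneity in the first argument
     (∀ (c : ℝ) (u v : ∀ t, X t), P.MemL2X u → P.MemL2X v →
        (∫ t in Ioc (0:ℝ) T, (inner ℝ (c • u t) (v t) : ℝ))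
          = c * ∫ t in Ioc (0:ℝ) T, (inner ℝ (u t) (v t) : ℝ)) ∧
     -- nonnegativity
     (∀ u : ∀ t, X t, P.MemL2X u → 0 ≤ ∫ t in Ioc (0:ℝ) T, (inner ℝ (u t) (u t) : ℝ)) ∧
     -- definiteness (as elements of `L²_X`, i.e. up to a.e. equality)
     (∀ u : ∀ t, X t, P.MemL2X u →
        (∫ t in Ioc (0:ℝ) T, (inner ℝ (u t) (u t) : ℝ)) = 0 →
        ∀ᵐ t ∂(volume.restrict (Ioc (0:ℝ) T)), u t = 0)) ∧
    -- dual statements for `L²_{X*}`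
    ((∀ f g : ∀ t, StrongDual ℝ (X t), P.MemL2Xstar f → P.MemL2Xstar g →
        IntegrableOn (fun t => dualInner (f t) (g t)) (Ioc 0 T)) ∧
     (∀ f g : ∀ t, StrongDual ℝ (X t), P.MemL2Xstar f → P.MemL2Xstar g →
        (∫ t in Ioc (0:ℝ) T, dualInner (f t) (g t))
          = ∫ t in Ioc (0:ℝ) T, dualInner (g t) (f t)) ∧
     (∀ f₁ f₂ g : ∀ t, StrongDual ℝ (X t),
        P.MemL2Xstar f₁ → P.MemL2Xstar f₂ → P.MemL2Xstar g →
        (∫ t in Ioc (0:ℝ) T, dualInner (f₁ t + f₂ t) (g t))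
          = (∫ t in Ioc (0:ℝ) T, dualInner (f₁ t) (g t))
            + ∫ t in Ioc (0:ℝ) T, dualInner (f₂ t) (g t)) ∧
     (∀ (c : ℝ) (f g : ∀ t, StrongDual ℝ (X t)), P.MemL2Xstar f → P.MemL2Xstar g →
        (∫ t in Ioc (0:ℝ) T, dualInner (c • f t) (g t))
          = c * ∫ t in Ioc (0:ℝ) T, dualInner (f t) (g t)) ∧
     (∀ f : ∀ t, StrongDual ℝ (X t), P.MemL2Xstar f →
        0 ≤ ∫ t in Ioc (0:ℝ) T, dualInner (f t) (f t)) ∧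
     (∀ f : ∀ t, StrongDual ℝ (X t), P.MemL2Xstar f →
        (∫ t in Ioc (0:ℝ) T, dualInner (f t) (f t)) = 0 →
        ∀ᵐ t ∂(volume.restrict (Ioc (0:ℝ) T)), f t = 0)) := by
  exact ⟨⟨fun _ _ => P.integrableOn_inner hT.le, integral_inner_isInnerProduct fun _ _ =>
      P.integrableOn_inner hT.le⟩,
    ⟨fun _ _ => P.integrableOn_inner_dual hT.le, integral_inner_isInnerProduct fun _ _ =>
      P.integrableOn_inner_dual hT.le⟩⟩
end
end

section
/- Let (X,(φ_t)_{t∈[0,T]}) be a compatible pair. Then L²_X, equipped with the inner product (u,v)_{L²_X} = ∫₀ᵀ (u(t), v(t))_{X(t)} dt, is a separable Hilbert space (in particular it is complete), and likewise L²_{X*}, equipped with (f,g)_{L²_{X*}} = ∫₀ᵀ (f(t), g(t))_{X(t)*} dt, is a separable Hilbert space. -/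
open MeasureTheory Set Filter Topology

noncomputable section

variable {T : ℝ} {X : ℝ → Type*} [∀ t, NormedAddCommGroup (X t)]
  [∀ t, InnerProductSpace ℝ (X t)]

/-!
Pulling back along `φ_t` compares the `L²_X` distance with the `L²(0,T; X₀)` distance of the
pullbacks up to the uniform constant `C` in both directions, so Cauchy sequences, limits and dense
sequences transfer between the two spaces; `L²_{X*}` is handled in the same way by `φ_t^*`, `X₀*`
being separable by the Riesz isomorphism. The delicate point is measurability of
`t ↦ ‖u(t) - v(t)‖_{X(t)}`, without which the Bochner integral in the Cauchy hypothesis is junk.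
It holds because `t ↦ ‖φ_t x‖` is measurable for each fixed `x` (a Carathéodory argument then
handles measurable `t ↦ x(t)`), and on the dual side because the dual norm is a supremum over a
countable dense set.
-/

open scoped NNReal ENNReal

section SqrtIntegral

variable {α E : Type*} [MeasurableSpace α] {μ : Measure α} [NormedAddCommGroup E]

lemma sqrt_integral_norm_sq_eq_lpNorm {f : α → E} (hf : AEStronglyMeasurable f μ) :
    √(∫ t, ‖f t‖ ^ 2 ∂μ) = lpNorm f 2 μ := by
  rw [lpNorm_eq_integral_norm_rpow_toReal two_ne_zero ENNReal.ofNat_ne_top hf,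
    Real.sqrt_eq_rpow]
  norm_num

lemma MeasureTheory.MemLp.dist_toLp_eq_sqrt_integral {f g : α → E} (hf : MemLp f 2 μ)
    (hg : MemLp g 2 μ) :
    dist (hf.toLp f) (hg.toLp g) = √(∫ t, ‖f t - g t‖ ^ 2 ∂μ) := by
  rw [dist_eq_norm, ← MemLp.toLp_sub, Lp.norm_toLp,
    toReal_eLpNorm (hf.sub hg).aestronglyMeasurable,
    ← sqrt_integral_norm_sq_eq_lpNorm (hf.sub hg).aestronglyMeasurable]
  rfl

lemma sqrt_integral_sq_le_mul_of_ae_le {g h : α → ℝ} {C : ℝ} (hC : 0 ≤ C) (hg : 0 ≤ g)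
    (hh : Integrable (fun t => h t ^ 2) μ) (hgh : ∀ᵐ t ∂μ, g t ≤ C * h t) :
    √(∫ t, g t ^ 2 ∂μ) ≤ C * √(∫ t, h t ^ 2 ∂μ) := by
  have hsq : ∀ᵐ t ∂μ, g t ^ 2 ≤ C ^ 2 * h t ^ 2 := by
    filter_upwards [hgh] with t ht
    rw [← mul_pow]
    exact pow_le_pow_left₀ (hg t) ht 2
  calc √(∫ t, g t ^ 2 ∂μ) ≤ √(∫ t, C ^ 2 * h t ^ 2 ∂μ) :=
        Real.sqrt_le_sqrt <| integral_mono_of_nonneg (.of_forall fun t => by positivity)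
          (hh.const_mul _) hsq
    _ = C * √(∫ t, h t ^ 2 ∂μ) := by
        rw [integral_const_mul, Real.sqrt_mul (sq_nonneg C), Real.sqrt_sq hC]

end SqrtIntegral

section Caratheodory

variable {α E β : Type*} [MeasurableSpace α] {μ : Measure α} [NormedAddCommGroup β]

lemma MeasureTheory.SimpleFunc.aestronglyMeasurable_caratheodory {F : α → E → β}
    (hF : ∀ x, AEStronglyMeasurable (fun t => F t x) μ) (s : SimpleFunc α E) :
    AEStronglyMeasurable (fun t => F t (s t)) μ := by
  have hsum : (fun t => F t (s t)) =
      fun t => ∑ c ∈ s.range, (s ⁻¹' {c}).indicator (fun t => F t c) t := by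
    funext t
    rw [Finset.sum_eq_single (s t)]
    · simp
    · exact fun c _ hc => indicator_of_notMem (Ne.symm hc) _
    · exact fun h => absurd (s.mem_range_self t) h
  rw [hsum]
  exact Finset.aestronglyMeasurable_fun_sum _ fun c _ =>
    (hF c).indicator (s.measurableSet_fiber c)

lemma MeasureTheory.AEStronglyMeasurable.caratheodory [TopologicalSpace E] {F : α → E → β}
    (hF : ∀ x, AEStronglyMeasurable (fun t => F t x) μ) (hcont : ∀ t, Continuous (F t))
    {w : α → E} (hw : AEStronglyMeasurable w μ) :
    AEStronglyMeasurable (fun t => F t (w t)) μ := by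
  obtain ⟨g, hg, hwg⟩ := hw
  have hFg : AEStronglyMeasurable (fun t => F t (g t)) μ :=
    aestronglyMeasurable_of_tendsto_ae atTop
      (fun k => (hg.approx k).aestronglyMeasurable_caratheodory hF)
      (.of_forall fun t => ((hcont t).tendsto _).comp (hg.tendsto_approx t))
  exact hFg.congr (by filter_upwards [hwg] with t ht; rw [ht])

end Caratheodory

theorem ContinuousLinearMap.norm_eq_iSup_div_of_denseRange {𝕜 E F ι : Type*}
    [NontriviallyNormedField 𝕜] [NormedAddCommGroup E] [NormedSpace 𝕜 E]
    [NormedAddCommGroup F] [NormedSpace 𝕜 F] (f : E →L[𝕜] F) {D : ι → E} (hD : DenseRange D) :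
    ‖f‖ = ⨆ i, ‖f (D i)‖ / ‖D i‖ := by
  have : Nonempty ι := hD.nonempty_iff.2 inferInstance
  have hbdd : BddAbove (range fun i => ‖f (D i)‖ / ‖D i‖) :=
    ⟨‖f‖, forall_mem_range.2 fun i => f.ratio_le_opNorm (D i)⟩
  refine le_antisymm (f.opNorm_le_bound (Real.iSup_nonneg fun i => by positivity)
    fun x => hD.induction_on x (isClosed_le (by fun_prop) (by fun_prop)) fun i => ?_)
    (ciSup_le fun i => f.ratio_le_opNorm (D i))
  rcases eq_or_ne (D i) 0 with h0 | h0
  · simp [h0]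
  · exact (div_le_iff₀ (norm_pos_iff.2 h0)).1 (le_ciSup hbdd i)

theorem ContinuousLinearMap.opNorm_comp_le_of_norm_apply_le {F G H : Type*}
    [NormedAddCommGroup F] [NormedSpace ℝ F] [NormedAddCommGroup G] [NormedSpace ℝ G]
    [NormedAddCommGroup H] [NormedSpace ℝ H] (f : F →L[ℝ] H) {L : G →L[ℝ] F} {C : ℝ≥0}
    (hL : ∀ x, ‖L x‖ ≤ C * ‖x‖) : ‖f.comp L‖ ≤ C * ‖f‖ :=
  (f.opNorm_comp_le L).trans <| by
    rw [mul_comm]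
    gcongr
    exact L.opNorm_le_bound C.2 hL

section Frame

variable {α E : Type*} {Y : α → Type*} [MeasurableSpace α] [NormedAddCommGroup E]
  [NormedSpace ℝ E] [∀ t, NormedAddCommGroup (Y t)] [∀ t, NormedSpace ℝ (Y t)]

/-- The `L²` sections of `Y` are the `u` whose pullbacks `t ↦ (e t).symm (u t)` lie in
`L²(μ; E)`. -/
structure IsBoundedMeasurableFrame (e : ∀ t, E ≃L[ℝ] Y t) (μ : Measure α) (C : ℝ≥0) : Prop where
  norm_apply_le : ∀ᵐ t ∂μ, ∀ x, ‖e t x‖ ≤ C * ‖x‖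
  norm_symm_apply_le : ∀ᵐ t ∂μ, ∀ y, ‖(e t).symm y‖ ≤ C * ‖y‖
  aestronglyMeasurable_norm_apply : ∀ x, AEStronglyMeasurable (fun t => ‖e t x‖) μ

namespace IsBoundedMeasurableFrame

variable {e : ∀ t, E ≃L[ℝ] Y t} {μ : Measure α} {C : ℝ≥0}

lemma sqrt_integral_norm_sub_apply_sq_le (he : IsBoundedMeasurableFrame e μ C) {u : ∀ t, Y t}
    {w : α → E} (hu : MemLp (fun t => (e t).symm (u t)) 2 μ) (hw : MemLp w 2 μ) :
    √(∫ t, ‖u t - e t (w t)‖ ^ 2 ∂μ) ≤ C * dist (hu.toLp _) (hw.toLp w) := by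
  rw [hu.dist_toLp_eq_sqrt_integral hw]
  refine sqrt_integral_sq_le_mul_of_ae_le C.2 (fun t => norm_nonneg _)
    ((hu.sub hw).integrable_norm_pow two_ne_zero) ?_
  filter_upwards [he.norm_apply_le] with t ht
  calc ‖u t - e t (w t)‖ = ‖e t ((e t).symm (u t) - w t)‖ := by
        rw [map_sub, ContinuousLinearEquiv.apply_symm_apply]
    _ ≤ C * ‖(e t).symm (u t) - w t‖ := ht _

lemma dist_toLp_le_mul_sqrt_integral (he : IsBoundedMeasurableFrame e μ C) {u v : ∀ t, Y t}
    (hu : MemLp (fun t => (e t).symm (u t)) 2 μ) (hv : MemLp (fun t => (e t).symm (v t)) 2 μ) :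
    dist (hu.toLp _) (hv.toLp _) ≤ C * √(∫ t, ‖u t - v t‖ ^ 2 ∂μ) := by
  have hdiff : ∀ t, ‖u t - v t‖ = ‖e t ((e t).symm (u t) - (e t).symm (v t))‖ := fun t => by
    rw [map_sub, ContinuousLinearEquiv.apply_symm_apply, ContinuousLinearEquiv.apply_symm_apply]
  have hmeas : AEStronglyMeasurable (fun t => ‖u t - v t‖) μ := by
    simp_rw [hdiff]
    exact (hu.sub hv).aestronglyMeasurable.caratheodory he.aestronglyMeasurable_norm_apply
      fun t => (e t).continuous.norm
  have hmem : MemLp (fun t => ‖u t - v t‖) 2 μ :=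
    (hu.sub hv).of_le_mul hmeas <| by
      filter_upwards [he.norm_apply_le] with t ht
      rw [norm_norm, hdiff]
      exact ht _
  rw [hu.dist_toLp_eq_sqrt_integral hv]
  refine sqrt_integral_sq_le_mul_of_ae_le C.2 (fun t => norm_nonneg _) hmem.integrable_sq ?_
  filter_upwards [he.norm_symm_apply_le] with t ht
  rw [← map_sub]
  exact ht _

theorem exists_tendsto_of_cauchy [CompleteSpace E] (he : IsBoundedMeasurableFrame e μ C)
    (u : ℕ → ∀ t, Y t) (hu : ∀ n, MemLp (fun t => (e t).symm (u n t)) 2 μ)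
    (hcau : ∀ ε > (0:ℝ), ∃ N, ∀ m ≥ N, ∀ n ≥ N, √(∫ t, ‖u m t - u n t‖ ^ 2 ∂μ) < ε) :
    ∃ v : ∀ t, Y t, MemLp (fun t => (e t).symm (v t)) 2 μ ∧
      Tendsto (fun n => √(∫ t, ‖u n t - v t‖ ^ 2 ∂μ)) atTop (𝓝 0) := by
  have hW : CauchySeq fun n => (hu n).toLp _ := by
    refine Metric.cauchySeq_iff.2 fun ε hε => ?_
    obtain ⟨N, hN⟩ := hcau (ε / (C + 1)) (by positivity)
    refine ⟨N, fun m hm n hn => ?_⟩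
    calc dist ((hu m).toLp _) ((hu n).toLp _) ≤ C * √(∫ t, ‖u m t - u n t‖ ^ 2 ∂μ) :=
          he.dist_toLp_le_mul_sqrt_integral (hu m) (hu n)
      _ ≤ (C + 1) * √(∫ t, ‖u m t - u n t‖ ^ 2 ∂μ) := by gcongr; linarith
      _ < (C + 1) * (ε / (C + 1)) := by gcongr; exact hN m hm n hn
      _ = ε := mul_div_cancel₀ ε (by positivity)
  obtain ⟨L, hL⟩ := cauchySeq_tendsto_of_complete hW
  refine ⟨fun t => e t (L t), by simpa using Lp.memLp L, ?_⟩
  refine squeeze_zero (fun n => Real.sqrt_nonneg _) (fun n => ?_)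
    (by simpa using (tendsto_iff_dist_tendsto_zero.1 hL).const_mul (C : ℝ))
  simpa [Lp.toLp_coeFn] using he.sqrt_integral_norm_sub_apply_sq_le (hu n) (Lp.memLp L)

theorem exists_dense_seq [IsSeparable μ] [TopologicalSpace.SeparableSpace E]
    (he : IsBoundedMeasurableFrame e μ C) :
    ∃ D : ℕ → ∀ t, Y t, (∀ n, MemLp (fun t => (e t).symm (D n t)) 2 μ) ∧
      ∀ u : ∀ t, Y t, MemLp (fun t => (e t).symm (u t)) 2 μ → ∀ ε > (0:ℝ), ∃ n,
        √(∫ t, ‖u t - D n t‖ ^ 2 ∂μ) < ε := by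
  have : Fact ((2 : ℝ≥0∞) ≠ ∞) := ⟨ENNReal.ofNat_ne_top⟩
  obtain ⟨g, hg⟩ := TopologicalSpace.exists_dense_seq (Lp E 2 μ)
  refine ⟨fun n t => e t (g n t), fun n => by simpa using Lp.memLp (g n), fun u hu ε hε => ?_⟩
  obtain ⟨n, hn⟩ := hg.exists_dist_lt (hu.toLp _) (ε := ε / (C + 1)) (by positivity)
  refine ⟨n, ?_⟩
  calc √(∫ t, ‖u t - e t (g n t)‖ ^ 2 ∂μ) ≤ C * dist (hu.toLp _) (g n) := by
        simpa [Lp.toLp_coeFn] using he.sqrt_integral_norm_sub_apply_sq_le hu (Lp.memLp (g n))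
    _ ≤ (C + 1) * dist (hu.toLp _) (g n) := by gcongr; linarith
    _ < (C + 1) * (ε / (C + 1)) := by gcongr
    _ = ε := mul_div_cancel₀ ε (by positivity)

theorem dual [TopologicalSpace.SeparableSpace E] (he : IsBoundedMeasurableFrame e μ C) :
    IsBoundedMeasurableFrame (fun t => (e t).arrowCongr (.refl ℝ ℝ)) μ C where
  norm_apply_le := by
    filter_upwards [he.norm_symm_apply_le] with t ht f
    exact f.opNorm_comp_le_of_norm_apply_le ht
  norm_symm_apply_le := by
    filter_upwards [he.norm_apply_le] with t ht f
    exact f.opNorm_comp_le_of_norm_apply_le ht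
  aestronglyMeasurable_norm_apply f := by
    obtain ⟨D, hD⟩ := TopologicalSpace.exists_dense_seq E
    have hnorm : ∀ t, ‖(e t).arrowCongr (.refl ℝ ℝ) f‖ = ⨆ n, ‖f (D n)‖ / ‖e t (D n)‖ := by
      intro t
      rw [ContinuousLinearMap.norm_eq_iSup_div_of_denseRange _
        ((e t).surjective.denseRange.comp hD (e t).continuous)]
      simp
    simp_rw [hnorm]
    exact (AEMeasurable.iSup fun n =>
      aemeasurable_const.div (he.aestronglyMeasurable_norm_apply (D n)).aemeasurable)
      |>.aestronglyMeasurable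

end IsBoundedMeasurableFrame

end Frame

theorem CompatiblePair.isBoundedMeasurableFrame (P : CompatiblePair T X) :
    IsBoundedMeasurableFrame P.φ (volume.restrict (Ioc 0 T)) ⟨P.C, P.C_pos.le⟩ where
  norm_apply_le := ae_restrict_of_forall_mem measurableSet_Ioc fun t ht =>
    P.norm_map_le t (Ioc_subset_Icc_self ht)
  norm_symm_apply_le := ae_restrict_of_forall_mem measurableSet_Ioc fun t ht =>
    P.norm_symm_le t (Ioc_subset_Icc_self ht)
  aestronglyMeasurable_norm_apply x :=
    ((P.continuous_norm x).mono Ioc_subset_Icc_self).aestronglyMeasurable measurableSet_Ioc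

theorem stmt4_general (T : ℝ) (X : ℝ → Type*) [∀ t, NormedAddCommGroup (X t)]
    [∀ t, InnerProductSpace ℝ (X t)] [∀ t, CompleteSpace (X t)]
    [∀ t, TopologicalSpace.SeparableSpace (X t)] (P : CompatiblePair T X) :
    -- `L²_X` is complete for the distance induced by its inner product norm
    ((∀ u : ℕ → ∀ t, X t, (∀ n, P.MemL2X (u n)) →
      (∀ ε > (0:ℝ), ∃ N, ∀ m ≥ N, ∀ n ≥ N,
        Real.sqrt (∫ t in Ioc (0:ℝ) T, ‖u m t - u n t‖ ^ 2) < ε) →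
      ∃ v : ∀ t, X t, P.MemL2X v ∧
        Tendsto (fun n => Real.sqrt (∫ t in Ioc (0:ℝ) T, ‖u n t - v t‖ ^ 2)) atTop
          (nhds 0)) ∧
    -- `L²_X` is separable
    (∃ D : ℕ → ∀ t, X t, (∀ n, P.MemL2X (D n)) ∧
      ∀ u : ∀ t, X t, P.MemL2X u → ∀ ε > (0:ℝ), ∃ n,
        Real.sqrt (∫ t in Ioc (0:ℝ) T, ‖u t - D n t‖ ^ 2) < ε)) ∧
    -- `L²_{X*}` is complete
    ((∀ f : ℕ → ∀ t, StrongDual ℝ (X t), (∀ n, P.MemL2Xstar (f n)) →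
      (∀ ε > (0:ℝ), ∃ N, ∀ m ≥ N, ∀ n ≥ N,
        Real.sqrt (∫ t in Ioc (0:ℝ) T, ‖f m t - f n t‖ ^ 2) < ε) →
      ∃ g : ∀ t, StrongDual ℝ (X t), P.MemL2Xstar g ∧
        Tendsto (fun n => Real.sqrt (∫ t in Ioc (0:ℝ) T, ‖f n t - g t‖ ^ 2)) atTop
          (nhds 0)) ∧
    -- `L²_{X*}` is separable
    (∃ D : ℕ → ∀ t, StrongDual ℝ (X t), (∀ n, P.MemL2Xstar (D n)) ∧
      ∀ f : ∀ t, StrongDual ℝ (X t), P.MemL2Xstar f → ∀ ε > (0:ℝ), ∃ n,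
        Real.sqrt (∫ t in Ioc (0:ℝ) T, ‖f t - D n t‖ ^ 2) < ε)) := by
  have hX := P.isBoundedMeasurableFrame
  have : TopologicalSpace.SeparableSpace (StrongDual ℝ (X 0)) :=
    (InnerProductSpace.toDual ℝ (X 0)).surjective.denseRange.separableSpace
      (InnerProductSpace.toDual ℝ (X 0)).continuous
  exact ⟨⟨hX.exists_tendsto_of_cauchy, hX.exists_dense_seq⟩,
    hX.dual.exists_tendsto_of_cauchy, hX.dual.exists_dense_seq⟩

theorem stmt4 (T : ℝ) (hT : 0 < T) (X : ℝ → Type*) [∀ t, NormedAddCommGroup (X t)]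
    [∀ t, InnerProductSpace ℝ (X t)] [∀ t, CompleteSpace (X t)]
    [∀ t, TopologicalSpace.SeparableSpace (X t)] (P : CompatiblePair T X) :
    -- `L²_X` is complete for the distance induced by its inner product norm
    ((∀ u : ℕ → ∀ t, X t, (∀ n, P.MemL2X (u n)) →
      (∀ ε > (0:ℝ), ∃ N, ∀ m ≥ N, ∀ n ≥ N,
        Real.sqrt (∫ t in Ioc (0:ℝ) T, ‖u m t - u n t‖ ^ 2) < ε) →
      ∃ v : ∀ t, X t, P.MemL2X v ∧
        Tendsto (fun n => Real.sqrt (∫ t in Ioc (0:ℝ) T, ‖u n t - v t‖ ^ 2)) atTop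
          (nhds 0)) ∧
    -- `L²_X` is separable
    (∃ D : ℕ → ∀ t, X t, (∀ n, P.MemL2X (D n)) ∧
      ∀ u : ∀ t, X t, P.MemL2X u → ∀ ε > (0:ℝ), ∃ n,
        Real.sqrt (∫ t in Ioc (0:ℝ) T, ‖u t - D n t‖ ^ 2) < ε)) ∧
    -- `L²_{X*}` is complete
    ((∀ f : ℕ → ∀ t, StrongDual ℝ (X t), (∀ n, P.MemL2Xstar (f n)) →
      (∀ ε > (0:ℝ), ∃ N, ∀ m ≥ N, ∀ n ≥ N,
        Real.sqrt (∫ t in Ioc (0:ℝ) T, ‖f m t - f n t‖ ^ 2) < ε) →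
      ∃ g : ∀ t, StrongDual ℝ (X t), P.MemL2Xstar g ∧
        Tendsto (fun n => Real.sqrt (∫ t in Ioc (0:ℝ) T, ‖f n t - g t‖ ^ 2)) atTop
          (nhds 0)) ∧
    -- `L²_{X*}` is separable
    (∃ D : ℕ → ∀ t, StrongDual ℝ (X t), (∀ n, P.MemL2Xstar (D n)) ∧
      ∀ f : ∀ t, StrongDual ℝ (X t), P.MemL2Xstar f → ∀ ε > (0:ℝ), ∃ n,
        Real.sqrt (∫ t in Ioc (0:ℝ) T, ‖f t - D n t‖ ^ 2) < ε)) :=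
  stmt4_general T X P
end
end

section
/- Let (X,(φ_t)_{t∈[0,T]}) be a compatible pair. Suppose f(t) ∈ X(t)* for almost every t ∈ [0,T], ∫₀ᵀ ‖f(t)‖²_{X(t)*} dt < ∞, and for every u ∈ L²_X the map t ↦ ⟨f(t), u(t)⟩_{X(t)*, X(t)} is measurable on [0,T]. Then f ∈ L²_{X*}, i.e. t ↦ φ_t^* f(t) is strongly measurable and belongs to L²(0,T;X₀*). -/
/-!
Testing `φ_t^* f(t)` against `v ∈ X₀` is testing `f(t)` against `u(t) = φ_t v`, a member of `L²_X`
because its pullback is constant; so all coordinates of `t ↦ φ_t^* f(t)` are measurable. In a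
separable Hilbert space a Hilbert basis is countable, so a map with measurable coordinates is a
pointwise limit of measurable finite sums, hence a.e. strongly measurable (Pettis). Square
integrability follows from `‖φ_t^* f(t)‖ ≤ C ‖f(t)‖`.
-/

open MeasureTheory Set Filter Topology

noncomputable section

variable {T : ℝ} {X : ℝ → Type*} [∀ t, NormedAddCommGroup (X t)]
  [∀ t, InnerProductSpace ℝ (X t)]

theorem Orthonormal.countable_of_separableSpace {𝕜 E ι : Type*} [RCLike 𝕜]
    [NormedAddCommGroup E] [InnerProductSpace 𝕜 E] [TopologicalSpace.SeparableSpace E]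
    {v : ι → E} (hv : Orthonormal 𝕜 v) : Countable ι := by
  have one_le_dist : Pairwise fun i j => 1 ≤ dist (v i) (v j) := by
    intro i j hij
    have hsq : ‖v i - v j‖ ^ 2 = 2 := by
      rw [@norm_sub_sq 𝕜, hv.1 i, hv.1 j, hv.2 hij]
      norm_num
    rw [dist_eq_norm]
    nlinarith [norm_nonneg (v i - v j)]
  refine Pairwise.countable_of_isOpen_disjoint (s := fun i => Metric.ball (v i) (1 / 2))
    (fun i j hij => Metric.ball_disjoint_ball ?_) (fun _ => Metric.isOpen_ball)
    (fun i => Metric.nonempty_ball.2 one_half_pos)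
  linarith [one_le_dist hij]

theorem aestronglyMeasurable_of_aemeasurable_inner {α 𝕜 E : Type*} [MeasurableSpace α]
    {μ : Measure α} [RCLike 𝕜] [NormedAddCommGroup E] [InnerProductSpace 𝕜 E]
    [CompleteSpace E] [TopologicalSpace.SeparableSpace E] {F : α → E}
    (hF : ∀ v : E, AEMeasurable (fun a => inner 𝕜 v (F a)) μ) :
    AEStronglyMeasurable F μ := by
  obtain ⟨w, b, -⟩ := exists_hilbertBasis 𝕜 E
  have : Countable w := b.orthonormal.countable_of_separableSpace
  refine aestronglyMeasurable_of_tendsto_ae atTop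
    (f := fun s : Finset w => fun a => ∑ i ∈ s, inner 𝕜 (b i) (F a) • b i) (fun s => ?_)
    (.of_forall fun a => by
      have hsum := b.hasSum_repr (F a)
      simp only [b.repr_apply_apply] at hsum
      exact hsum)
  exact Finset.aestronglyMeasurable_fun_sum s fun i _ =>
    (hF (b i)).aestronglyMeasurable.smul_const (b i)

theorem aestronglyMeasurable_strongDual_of_aemeasurable_apply {α E : Type*}
    [MeasurableSpace α] {μ : Measure α} [NormedAddCommGroup E] [InnerProductSpace ℝ E]
    [CompleteSpace E] [TopologicalSpace.SeparableSpace E] {g : α → StrongDual ℝ E}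
    (hg : ∀ v : E, AEMeasurable (fun a => g a v) μ) : AEStronglyMeasurable g μ := by
  have hF : AEStronglyMeasurable (fun a => (InnerProductSpace.toDual ℝ E).symm (g a)) μ :=
    aestronglyMeasurable_of_aemeasurable_inner (𝕜 := ℝ) fun v => by
      simpa only [real_inner_comm _ v, InnerProductSpace.toDual_symm_apply] using hg v
  simpa only [LinearIsometryEquiv.apply_symm_apply] using
    (InnerProductSpace.toDual ℝ E).continuous.comp_aestronglyMeasurable hF

namespace CompatiblePair

variable (P : CompatiblePair T X)

theorem memL2X_map_const (v : X 0) : P.MemL2X fun t => P.φ t v := by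
  simpa only [MemL2X, ContinuousLinearEquiv.symm_apply_apply] using memLp_const v

theorem norm_pullDual_le {t : ℝ} (ht : t ∈ Icc 0 T) (g : StrongDual ℝ (X t)) :
    ‖P.pullDual t g‖ ≤ P.C * ‖g‖ :=
  calc ‖P.pullDual t g‖ ≤ ‖g‖ * ‖(P.φ t : X 0 →L[ℝ] X t)‖ := g.opNorm_comp_le _
    _ ≤ ‖g‖ * P.C := by
        gcongr
        exact ContinuousLinearMap.opNorm_le_bound _ P.C_pos.le (P.norm_map_le t ht)
    _ = P.C * ‖g‖ := mul_comm _ _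

end CompatiblePair

theorem stmt6_general (T : ℝ) (X : ℝ → Type*) [∀ t, NormedAddCommGroup (X t)]
    [∀ t, InnerProductSpace ℝ (X t)] [∀ t, CompleteSpace (X t)]
    [∀ t, TopologicalSpace.SeparableSpace (X t)] (P : CompatiblePair T X)
    (f : ∀ t, StrongDual ℝ (X t))
    (hnorm : (∫⁻ t in Ioc (0:ℝ) T, (‖f t‖₊ : ENNReal) ^ 2) < ⊤)
    (hmeas : ∀ u : ∀ t, X t, P.MemL2X u →
      AEMeasurable (fun t => f t (u t)) (volume.restrict (Ioc (0:ℝ) T))) :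
    P.MemL2Xstar f := by
  have hf : eLpNorm (fun t => ‖f t‖) 2 (volume.restrict (Ioc 0 T)) < ⊤ := by
    rw [eLpNorm_lt_top_iff_lintegral_rpow_enorm_lt_top two_ne_zero ENNReal.ofNat_ne_top]
    simp_rw [enorm_norm, ENNReal.toReal_ofNat, ENNReal.rpow_ofNat, enorm_eq_nnnorm]
    exact hnorm
  have hbound : ∀ᵐ t ∂volume.restrict (Ioc 0 T), ‖P.pullDual t (f t)‖ ≤ P.C * ‖‖f t‖‖ :=
    (ae_restrict_mem measurableSet_Ioc).mono fun t ht => by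
      simpa only [norm_norm] using P.norm_pullDual_le (Ioc_subset_Icc_self ht) (f t)
  refine ⟨aestronglyMeasurable_strongDual_of_aemeasurable_apply fun v =>
    hmeas _ (P.memL2X_map_const v), ?_⟩
  exact (eLpNorm_le_mul_eLpNorm_of_ae_le_mul hbound 2).trans_lt
    (ENNReal.mul_lt_top ENNReal.ofReal_lt_top hf)

theorem stmt6 (T : ℝ) (hT : 0 < T) (X : ℝ → Type*) [∀ t, NormedAddCommGroup (X t)]
    [∀ t, InnerProductSpace ℝ (X t)] [∀ t, CompleteSpace (X t)]
    [∀ t, TopologicalSpace.SeparableSpace (X t)] (P : CompatiblePair T X)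
    (f : ∀ t, StrongDual ℝ (X t))
    (hnorm : (∫⁻ t in Ioc (0:ℝ) T, (‖f t‖₊ : ENNReal) ^ 2) < ⊤)
    (hmeas : ∀ u : ∀ t, X t, P.MemL2X u →
      AEMeasurable (fun t => f t (u t)) (volume.restrict (Ioc (0:ℝ) T))) :
    P.MemL2Xstar f :=
  stmt6_general T X P f hnorm hmeas
end
end

section
/- Let (X,(φ_t)_{t∈[0,T]}) be a compatible pair. Then the map J : L²_{X*} → (L²_X)* defined by ⟨Jf, u⟩ := ∫₀ᵀ ⟨f(t), u(t)⟩_{X(t)*, X(t)} dt is a linear isometric isomorphism of L²_{X*} onto the dual space (L²_X)*; hence (L²_X)* may be identified with L²_{X*} and the duality pairing of f ∈ L²_{X*} with u ∈ L²_X is ∫₀ᵀ ⟨f(t), u(t)⟩_{X(t)*, X(t)} dt. -/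
/-!
Transport along `φ`: `u ↦ (t ↦ φ_{-t} u(t))` identifies `L²_X` with the Hilbert space
`L²(0,T;X₀)`, the two norms being equivalent with constant `C`. A bounded functional on `L²_X`
therefore becomes one on `L²(0,T;X₀)`, and its Riesz representative `w` yields
`f(t) = φ_{-t}^* ⟪w(t), ·⟫`, which gives surjectivity.

For injectivity and the isometry one needs, for `f ∈ L²_{X*}`, a measurable selection of the
Riesz representatives `u(t) ∈ X(t)` of `f(t)`. The Lax–Milgram theorem for the coercive form
`B(G, G') = ∫ ⟪φ_t G(t), φ_t G'(t)⟫` on `L²(0,T;X₀)` provides `G` with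
`B(G, ·) = ∫ f(t)(φ_t ·)`; testing with indicators of sets times the vectors of a countable dense
subset of `X₀` shows that `u(t) = φ_t G(t)` represents `f(t)` for a.e. `t`. Then
`‖f(t)‖ = ‖u(t)‖`, `u = 0` when `J f = 0`, and the supremum defining the norm of `J f` is attained
at `u / ‖u‖_{L²_X}`.
-/

open MeasureTheory Set Filter Topology

noncomputable section

variable {T : ℝ} {X : ℝ → Type*} [∀ t, NormedAddCommGroup (X t)]
  [∀ t, InnerProductSpace ℝ (X t)]

open scoped InnerProductSpace

section L2

variable {α E : Type*} [MeasurableSpace α] {μ : Measure α}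

theorem MeasureTheory.L2.norm_sq_eq_integral_norm_sq [NormedAddCommGroup E]
    [InnerProductSpace ℝ E] (G : Lp E 2 μ) : ‖G‖ ^ 2 = ∫ t, ‖G t‖ ^ 2 ∂μ := by
  rw [← real_inner_self_eq_norm_sq, L2.inner_def]
  simp only [real_inner_self_eq_norm_sq]

theorem integral_mul_le_sqrt_mul_sqrt {a b : α → ℝ} (ha : MemLp a 2 μ) (hb : MemLp b 2 μ) :
    ∫ t, a t * b t ∂μ ≤ √(∫ t, a t ^ 2 ∂μ) * √(∫ t, b t ^ 2 ∂μ) := by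
  have h_sq {c : α → ℝ} (hc : MemLp c 2 μ) : ∫ t, c t ^ 2 ∂μ = ‖hc.toLp c‖ ^ 2 := by
    rw [L2.norm_sq_eq_integral_norm_sq]
    refine integral_congr_ae ?_
    filter_upwards [hc.coeFn_toLp] with t ht
    simp [ht]
  have h_mul : ∫ t, a t * b t ∂μ = ⟪ha.toLp a, hb.toLp b⟫_ℝ := by
    rw [L2.inner_def]
    refine integral_congr_ae ?_
    filter_upwards [ha.coeFn_toLp, hb.coeFn_toLp] with t hta htb
    simp [hta, htb, mul_comm]
  rw [h_mul, h_sq ha, h_sq hb, Real.sqrt_sq (norm_nonneg _), Real.sqrt_sq (norm_nonneg _)]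
  exact real_inner_le_norm _ _

theorem integrable_apply_of_memLp_two [NormedAddCommGroup E] [NormedSpace ℝ E]
    {L : α → StrongDual ℝ E} {g : α → E} (hL : MemLp L 2 μ) (hg : MemLp g 2 μ) :
    Integrable (fun t => L t (g t)) μ := by
  have h_meas : AEStronglyMeasurable (fun t => L t (g t)) μ :=
    isBoundedBilinearMap_apply.continuous.comp_aestronglyMeasurable (hL.1.prodMk hg.1)
  refine Integrable.mono' (hL.norm.integrable_mul hg.norm) h_meas ?_
  exact Eventually.of_forall fun t => (L t).le_opNorm (g t)

theorem ae_forall_eq_of_forall_ae_eq [TopologicalSpace E] [TopologicalSpace.SeparableSpace E]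
    {β : Type*} [TopologicalSpace β] [T2Space β] {p q : α → E → β}
    (hp : ∀ t, Continuous (p t)) (hq : ∀ t, Continuous (q t))
    (h : ∀ v, ∀ᵐ t ∂μ, p t v = q t v) : ∀ᵐ t ∂μ, ∀ v, p t v = q t v := by
  obtain ⟨D, hD_count, hD_dense⟩ := TopologicalSpace.exists_countable_dense E
  have h_D : ∀ᵐ t ∂μ, ∀ v ∈ D, p t v = q t v := (ae_ball_iff hD_count).2 fun v _ => h v
  filter_upwards [h_D] with t ht
  exact congrFun (Continuous.ext_on hD_dense (hp t) (hq t) ht)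

end L2

namespace CompatiblePair

variable (P : CompatiblePair T X)

@[simp]
theorem pullDual_apply_symm (t : ℝ) (F : StrongDual ℝ (X t)) (x : X t) :
    P.pullDual t F ((P.φ t).symm x) = F x := by
  simp [pullDual]

@[simp]
theorem pullDual_pushDual (t : ℝ) (F : StrongDual ℝ (X 0)) :
    P.pullDual t (P.pushDual t F) = F := by
  ext x
  simp [pullDual, pushDual]

theorem norm_symm_le_of_mem_Ioc {t : ℝ} (ht : t ∈ Ioc 0 T) (x : X 0) :
    ‖x‖ ≤ P.C * ‖P.φ t x‖ := by
  simpa using P.norm_symm_le t (Ioc_subset_Icc_self ht) (P.φ t x)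

theorem continuousOn_inner_map (x y : X 0) :
    ContinuousOn (fun t => ⟪P.φ t x, P.φ t y⟫_ℝ) (Icc 0 T) := by
  simp_rw [real_inner_eq_norm_add_mul_self_sub_norm_mul_self_sub_norm_mul_self_div_two,
    ← map_add]
  have := P.continuous_norm
  fun_prop

theorem memL2X_map {g : ℝ → X 0} (hg : MemLp g 2 (volume.restrict (Ioc 0 T))) :
    P.MemL2X fun t => P.φ t (g t) := by
  simpa [MemL2X] using hg

theorem integrable_apply {f : ∀ t, StrongDual ℝ (X t)} {u : ∀ t, X t} (hf : P.MemL2Xstar f)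
    (hu : P.MemL2X u) : Integrable (fun t => f t (u t)) (volume.restrict (Ioc 0 T)) := by
  simpa using integrable_apply_of_memLp_two hf hu

namespace MemL2X

variable {P} {u v : ∀ t, X t}

theorem add (hu : P.MemL2X u) (hv : P.MemL2X v) : P.MemL2X (u + v) := by
  simp only [MemL2X, Pi.add_apply, map_add]
  exact MemLp.add hu hv

theorem sub (hu : P.MemL2X u) (hv : P.MemL2X v) : P.MemL2X (u - v) := by
  simp only [MemL2X, Pi.sub_apply, map_sub]
  exact MemLp.sub hu hv

theorem const_smul (c : ℝ) (hu : P.MemL2X u) : P.MemL2X (c • u) := by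
  simp only [MemL2X, Pi.smul_apply, map_smul]
  exact MemLp.const_smul hu c

end MemL2X

theorem map_congr_ae {F : (∀ t, X t) → ℝ}
    (hadd : ∀ u v : ∀ t, X t, P.MemL2X u → P.MemL2X v → F (u + v) = F u + F v)
    {M : ℝ}
    (hM : ∀ u : ∀ t, X t, P.MemL2X u → |F u| ≤ M * √(∫ t in Ioc 0 T, ‖u t‖ ^ 2))
    {u v : ∀ t, X t} (hu : P.MemL2X u) (hv : P.MemL2X v)
    (huv : ∀ᵐ t ∂volume.restrict (Ioc 0 T), u t = v t) : F u = F v := by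
  have h_zero : ∫ t in Ioc 0 T, ‖(u - v) t‖ ^ 2 = 0 := by
    refine integral_eq_zero_of_ae ?_
    filter_upwards [huv] with t ht
    simp [ht]
  have h_diff := hM _ (hu.sub hv)
  rw [h_zero, Real.sqrt_zero, mul_zero, abs_nonpos_iff] at h_diff
  rw [← add_sub_cancel v u, hadd _ _ hv (hu.sub hv), h_diff, add_zero]

variable [TopologicalSpace.SeparableSpace (X 0)]

/-- Carathéodory: `⟪φ_t x, φ_t y⟫` is measurable in `t` and continuous in `(x, y)`. -/
theorem aestronglyMeasurable_inner_map {g g' : ℝ → X 0}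
    (hg : AEStronglyMeasurable g (volume.restrict (Ioc 0 T)))
    (hg' : AEStronglyMeasurable g' (volume.restrict (Ioc 0 T))) :
    AEStronglyMeasurable (fun t => ⟪P.φ t (g t), P.φ t (g' t)⟫_ℝ)
      (volume.restrict (Ioc 0 T)) := by
  borelize (X 0)
  classical
  let u : X 0 × X 0 → ℝ → ℝ := fun p =>
    (Icc 0 T).piecewise (fun t => ⟪P.φ t p.1, P.φ t p.2⟫_ℝ) 0
  have hu_cont : ∀ t, Continuous fun p => u p t := by
    intro t
    by_cases ht : t ∈ Icc 0 T
    · simp only [u, piecewise_eq_of_mem _ _ _ ht]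
      fun_prop
    · simp only [u, piecewise_eq_of_notMem _ _ _ ht]
      fun_prop
  have hu_meas : ∀ p, Measurable (u p) := fun p =>
    (P.continuousOn_inner_map p.1 p.2).measurable_piecewise continuousOn_const measurableSet_Icc
  have h_meas : Measurable fun t => u (hg.mk g t, hg'.mk g' t) t :=
    (measurable_uncurry_of_continuous_of_measurable hu_cont hu_meas).comp
      ((hg.stronglyMeasurable_mk.measurable.prodMk hg'.stronglyMeasurable_mk.measurable).prodMk
        measurable_id)
  refine h_meas.aestronglyMeasurable.congr ?_
  filter_upwards [hg.ae_eq_mk, hg'.ae_eq_mk, ae_restrict_mem measurableSet_Ioc]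
    with t ht ht' ht_mem
  simp only [u, piecewise_eq_of_mem _ _ _ (Ioc_subset_Icc_self ht_mem), ht, ht']

namespace MemL2X

variable {P} {u v : ∀ t, X t}

theorem aestronglyMeasurable_inner (hu : P.MemL2X u) (hv : P.MemL2X v) :
    AEStronglyMeasurable (fun t => ⟪u t, v t⟫_ℝ) (volume.restrict (Ioc 0 T)) := by
  simpa using P.aestronglyMeasurable_inner_map hu.1 hv.1

theorem memLp_norm (hu : P.MemL2X u) :
    MemLp (fun t => ‖u t‖) 2 (volume.restrict (Ioc 0 T)) := by
  have h_meas : AEStronglyMeasurable (fun t => ‖u t‖) (volume.restrict (Ioc 0 T)) := by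
    simpa only [← norm_eq_sqrt_real_inner] using
      (hu.aestronglyMeasurable_inner hu).aemeasurable.sqrt.aestronglyMeasurable
  refine MemLp.of_le_mul (c := P.C) hu h_meas ?_
  filter_upwards [ae_restrict_mem measurableSet_Ioc] with t ht
  simpa using P.norm_map_le t (Ioc_subset_Icc_self ht) ((P.φ t).symm (u t))

theorem integrable_inner (hu : P.MemL2X u) (hv : P.MemL2X v) :
    Integrable (fun t => ⟪u t, v t⟫_ℝ) (volume.restrict (Ioc 0 T)) :=
  (hu.memLp_norm.integrable_mul hv.memLp_norm).mono' (hu.aestronglyMeasurable_inner hv)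
    (Eventually.of_forall fun t => abs_real_inner_le_norm (u t) (v t))

theorem abs_integral_inner_le (hu : P.MemL2X u) (hv : P.MemL2X v) :
    |∫ t in Ioc 0 T, ⟪u t, v t⟫_ℝ|
      ≤ √(∫ t in Ioc 0 T, ‖u t‖ ^ 2) * √(∫ t in Ioc 0 T, ‖v t‖ ^ 2) :=
  calc |∫ t in Ioc 0 T, ⟪u t, v t⟫_ℝ| ≤ ∫ t in Ioc 0 T, ‖u t‖ * ‖v t‖ :=
        (abs_integral_le_integral_abs).trans <|
          integral_mono (hu.integrable_inner hv).abs
            (hu.memLp_norm.integrable_mul hv.memLp_norm)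
            fun t => abs_real_inner_le_norm (u t) (v t)
    _ ≤ _ := integral_mul_le_sqrt_mul_sqrt hu.memLp_norm hv.memLp_norm

end MemL2X

theorem sqrt_integral_norm_map_sq_le (G : Lp (X 0) 2 (volume.restrict (Ioc 0 T))) :
    √(∫ t in Ioc 0 T, ‖P.φ t (G t)‖ ^ 2) ≤ P.C * ‖G‖ := by
  rw [← Real.sqrt_sq (mul_nonneg P.C_pos.le (norm_nonneg G))]
  refine Real.sqrt_le_sqrt ?_
  rw [mul_pow, L2.norm_sq_eq_integral_norm_sq, ← integral_const_mul]
  refine integral_mono_ae (P.memL2X_map (Lp.memLp G)).memLp_norm.integrable_sq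
    ((Lp.memLp G).norm.integrable_sq.const_mul _) ?_
  filter_upwards [ae_restrict_mem measurableSet_Ioc] with t ht
  rw [← mul_pow]
  gcongr
  exact P.norm_map_le t (Ioc_subset_Icc_self ht) (G t)

theorem norm_sq_le_integral_norm_map_sq (G : Lp (X 0) 2 (volume.restrict (Ioc 0 T))) :
    ‖G‖ ^ 2 ≤ P.C ^ 2 * ∫ t in Ioc 0 T, ‖P.φ t (G t)‖ ^ 2 := by
  rw [L2.norm_sq_eq_integral_norm_sq, ← integral_const_mul]
  refine integral_mono_ae (Lp.memLp G).norm.integrable_sq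
    ((P.memL2X_map (Lp.memLp G)).memLp_norm.integrable_sq.const_mul _) ?_
  filter_upwards [ae_restrict_mem measurableSet_Ioc] with t ht
  rw [← mul_pow]
  gcongr
  exact P.norm_symm_le_of_mem_Ioc ht (G t)

section Functionals

variable {F : (∀ t, X t) → ℝ}
  (hadd : ∀ u v : ∀ t, X t, P.MemL2X u → P.MemL2X v → F (u + v) = F u + F v)
  {M : ℝ}
  (hM : ∀ u : ∀ t, X t, P.MemL2X u → |F u| ≤ M * √(∫ t in Ioc 0 T, ‖u t‖ ^ 2))
include hadd hM

theorem exists_clm_eq_map_comp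
    (hsmul : ∀ (c : ℝ) (u : ∀ t, X t), P.MemL2X u → F (c • u) = c * F u) :
    ∃ Λ : Lp (X 0) 2 (volume.restrict (Ioc 0 T)) →L[ℝ] ℝ,
      ∀ G, Λ G = F fun t => P.φ t (G t) := by
  have hφ := fun G : Lp (X 0) 2 (volume.restrict (Ioc 0 T)) => P.memL2X_map (Lp.memLp G)
  let Λ : Lp (X 0) 2 (volume.restrict (Ioc 0 T)) →ₗ[ℝ] ℝ :=
    { toFun := fun G => F fun t => P.φ t (G t)
      map_add' := fun G G' => by
        rw [← hadd _ _ (hφ G) (hφ G')]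
        refine P.map_congr_ae hadd hM (hφ _) ((hφ G).add (hφ G')) ?_
        filter_upwards [Lp.coeFn_add G G'] with t ht
        simp only [ht, Pi.add_apply, map_add]
      map_smul' := fun c G => by
        rw [RingHom.id_apply, smul_eq_mul, ← hsmul c _ (hφ G)]
        refine P.map_congr_ae hadd hM (hφ _) ((hφ G).const_smul c) ?_
        filter_upwards [Lp.coeFn_smul c G] with t ht
        simp only [ht, Pi.smul_apply, map_smul] }
  refine ⟨Λ.mkContinuous (max M 0 * P.C) fun G => ?_, fun G => rfl⟩
  calc ‖Λ G‖ ≤ M * √(∫ t in Ioc 0 T, ‖P.φ t (G t)‖ ^ 2) := hM _ (hφ G)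
    _ ≤ max M 0 * (P.C * ‖G‖) :=
      mul_le_mul (le_max_left M 0) (P.sqrt_integral_norm_map_sq_le G) (Real.sqrt_nonneg _)
        (le_max_right M 0)
    _ = max M 0 * P.C * ‖G‖ := by ring

variable [∀ t, CompleteSpace (X t)]

theorem exists_memL2Xstar_eq_integral
    (hsmul : ∀ (c : ℝ) (u : ∀ t, X t), P.MemL2X u → F (c • u) = c * F u) :
    ∃ f : ∀ t, StrongDual ℝ (X t), P.MemL2Xstar f ∧
      ∀ u : ∀ t, X t, P.MemL2X u → F u = ∫ t in Ioc 0 T, f t (u t) := by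
  obtain ⟨Λ, hΛ⟩ := P.exists_clm_eq_map_comp hadd hM hsmul
  set w := (InnerProductSpace.toDual ℝ (Lp (X 0) 2 (volume.restrict (Ioc 0 T)))).symm Λ
  refine ⟨fun t => P.pushDual t (innerSL ℝ (w t)), ?_, fun u hu => ?_⟩
  · simp only [MemL2Xstar, pullDual_pushDual]
    exact (innerSL ℝ).comp_memLp' (Lp.memLp w)
  · have hG := MemLp.coeFn_toLp (show MemLp _ 2 _ from hu)
    calc F u = Λ (MemLp.toLp _ hu) := by
          rw [hΛ]
          refine P.map_congr_ae hadd hM hu (P.memL2X_map (Lp.memLp _)) ?_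
          filter_upwards [hG] with t ht
          simp [ht]
      _ = ∫ t in Ioc 0 T, ⟪w t, (MemLp.toLp _ hu : ℝ → X 0) t⟫_ℝ := by
          rw [← L2.inner_def, InnerProductSpace.toDual_symm_apply]
      _ = ∫ t in Ioc 0 T, P.pushDual t (innerSL ℝ (w t)) (u t) := by
          refine integral_congr_ae ?_
          filter_upwards [hG] with t ht
          simp [ht, pushDual]

end Functionals

/-- The inner product of `L²_X`, transported to `L²(0,T;X₀)` along `φ`. -/
def gramForm :
    Lp (X 0) 2 (volume.restrict (Ioc 0 T)) →L[ℝ]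
      Lp (X 0) 2 (volume.restrict (Ioc 0 T)) →L[ℝ] ℝ :=
  have hφ := fun G : Lp (X 0) 2 (volume.restrict (Ioc 0 T)) => P.memL2X_map (Lp.memLp G)
  LinearMap.mkContinuous₂
    (LinearMap.mk₂ ℝ (fun G G' => ∫ t in Ioc 0 T, ⟪P.φ t (G t), P.φ t (G' t)⟫_ℝ)
      (fun G₁ G₂ G' => by
        rw [← integral_add ((hφ G₁).integrable_inner (hφ G'))
          ((hφ G₂).integrable_inner (hφ G'))]
        refine integral_congr_ae ?_
        filter_upwards [Lp.coeFn_add G₁ G₂] with t ht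
        simp only [ht, Pi.add_apply, map_add, inner_add_left])
      (fun c G G' => by
        rw [smul_eq_mul, ← integral_const_mul]
        refine integral_congr_ae ?_
        filter_upwards [Lp.coeFn_smul c G] with t ht
        simp only [ht, Pi.smul_apply, map_smul, real_inner_smul_left])
      (fun G G₁ G₂ => by
        rw [← integral_add ((hφ G).integrable_inner (hφ G₁))
          ((hφ G).integrable_inner (hφ G₂))]
        refine integral_congr_ae ?_
        filter_upwards [Lp.coeFn_add G₁ G₂] with t ht
        simp only [ht, Pi.add_apply, map_add, inner_add_right])
      (fun c G G' => by
        rw [smul_eq_mul, ← integral_const_mul]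
        refine integral_congr_ae ?_
        filter_upwards [Lp.coeFn_smul c G'] with t ht
        simp only [ht, Pi.smul_apply, map_smul, real_inner_smul_right]))
    (P.C ^ 2) fun G G' =>
      calc |∫ t in Ioc 0 T, ⟪P.φ t (G t), P.φ t (G' t)⟫_ℝ|
          ≤ √(∫ t in Ioc 0 T, ‖P.φ t (G t)‖ ^ 2)
            * √(∫ t in Ioc 0 T, ‖P.φ t (G' t)‖ ^ 2) :=
            (hφ G).abs_integral_inner_le (hφ G')
        _ ≤ (P.C * ‖G‖) * (P.C * ‖G'‖) :=
            mul_le_mul (P.sqrt_integral_norm_map_sq_le G) (P.sqrt_integral_norm_map_sq_le G')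
              (Real.sqrt_nonneg _) (mul_nonneg P.C_pos.le (norm_nonneg G))
        _ = P.C ^ 2 * ‖G‖ * ‖G'‖ := by ring

theorem gramForm_apply (G G' : Lp (X 0) 2 (volume.restrict (Ioc 0 T))) :
    P.gramForm G G' = ∫ t in Ioc 0 T, ⟪P.φ t (G t), P.φ t (G' t)⟫_ℝ :=
  rfl

theorem isCoercive_gramForm : IsCoercive P.gramForm := by
  refine ⟨(P.C ^ 2)⁻¹, by have := P.C_pos; positivity, fun G => ?_⟩
  rw [mul_assoc, ← sq, inv_mul_le_iff₀ (by have := P.C_pos; positivity), gramForm_apply]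
  simpa only [real_inner_self_eq_norm_sq] using P.norm_sq_le_integral_norm_map_sq G

theorem ae_inner_map_eq_of_forall_gramForm_eq {g r : Lp (X 0) 2 (volume.restrict (Ioc 0 T))}
    (h : ∀ G, P.gramForm g G = ⟪r, G⟫_ℝ) (v : X 0) :
    ∀ᵐ t ∂volume.restrict (Ioc 0 T), ⟪P.φ t (g t), P.φ t v⟫_ℝ = ⟪r t, v⟫_ℝ := by
  have hint₁ := (P.memL2X_map (Lp.memLp g)).integrable_inner (P.memL2X_map (memLp_const v))
  have hint₂ := ((Lp.memLp r).inner_const (𝕜 := ℝ) v).integrable one_le_two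
  have h_sub := (hint₁.sub hint₂).ae_eq_zero_of_forall_setIntegral_eq_zero fun A hA hμA => by
    have h_test := h (indicatorConstLp 2 hA hμA.ne v)
    rw [gramForm_apply, real_inner_comm, L2.inner_indicatorConstLp_eq_setIntegral_inner ℝ]
      at h_test
    simp only [Pi.sub_apply]
    rw [integral_sub hint₁.integrableOn hint₂.integrableOn, sub_eq_zero,
      ← integral_indicator hA]
    calc ∫ t in Ioc 0 T, A.indicator (fun t => ⟪P.φ t (g t), P.φ t v⟫_ℝ) t
        = ∫ t in Ioc 0 T, ⟪P.φ t (g t), P.φ t (indicatorConstLp 2 hA hμA.ne v t)⟫_ℝ := by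
          refine integral_congr_ae ?_
          filter_upwards [indicatorConstLp_coeFn (p := 2) (hs := hA) (hμs := hμA.ne) (c := v)]
            with t ht
          by_cases htA : t ∈ A <;> simp [ht, htA]
      _ = ∫ t in A, ⟪r t, v⟫_ℝ ∂volume.restrict (Ioc 0 T) := by
          simp only [h_test, real_inner_comm]
  filter_upwards [h_sub] with t ht
  exact sub_eq_zero.1 ht

variable [∀ t, CompleteSpace (X t)] {f : ∀ t, StrongDual ℝ (X t)}

theorem exists_memL2X_ae_eq_innerSL (hf : P.MemL2Xstar f) :
    ∃ u : ∀ t, X t, P.MemL2X u ∧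
      ∀ᵐ t ∂volume.restrict (Ioc 0 T), f t = innerSL ℝ (u t) := by
  set R := (InnerProductSpace.toDual ℝ (X 0)).symm
  have hr : MemLp (fun t => R (P.pullDual t (f t))) 2 (volume.restrict (Ioc 0 T)) :=
    R.toContinuousLinearEquiv.toContinuousLinearMap.comp_memLp' hf
  set g := P.isCoercive_gramForm.continuousLinearEquivOfBilin.symm (hr.toLp _)
  have hg : ∀ G, P.gramForm g G = ⟪hr.toLp _, G⟫_ℝ := fun G => by
    rw [← P.isCoercive_gramForm.continuousLinearEquivOfBilin_apply,
      ContinuousLinearEquiv.apply_symm_apply]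
  have h_pt v := (P.ae_inner_map_eq_of_forall_gramForm_eq hg v).and
    (hr.coeFn_toLp.mono fun t ht => congrArg (⟪·, v⟫_ℝ) ht)
  refine ⟨fun t => P.φ t (g t), P.memL2X_map (Lp.memLp g), ?_⟩
  filter_upwards [ae_forall_eq_of_forall_ae_eq (fun t => by fun_prop) (fun t => by fun_prop)
    fun v => (h_pt v).mono fun t ht => ht.1.trans ht.2] with t ht
  ext x
  simpa [R, InnerProductSpace.toDual_symm_apply] using (ht ((P.φ t).symm x)).symm

theorem ae_eq_zero_of_forall_integral_eq_zero (hf : P.MemL2Xstar f)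
    (hz : ∀ u : ∀ t, X t, P.MemL2X u → ∫ t in Ioc 0 T, f t (u t) = 0) :
    ∀ᵐ t ∂volume.restrict (Ioc 0 T), f t = 0 := by
  obtain ⟨u, hu, hfu⟩ := P.exists_memL2X_ae_eq_innerSL hf
  have h_int : ∫ t in Ioc 0 T, ‖u t‖ ^ 2 = 0 := by
    refine (integral_congr_ae ?_).trans (hz u hu)
    filter_upwards [hfu] with t ht
    simp [ht]
  have h_ae := (integral_eq_zero_iff_of_nonneg (fun t => sq_nonneg ‖u t‖)
    hu.memLp_norm.integrable_sq).1 h_int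
  filter_upwards [h_ae, hfu] with t h0 ht
  rw [ht, norm_eq_zero.1 (pow_eq_zero_iff two_ne_zero |>.1 h0), map_zero]

theorem isLUB_integral_apply (hf : P.MemL2Xstar f) :
    IsLUB {r : ℝ | ∃ u : ∀ t, X t, P.MemL2X u ∧
        √(∫ t in Ioc 0 T, ‖u t‖ ^ 2) ≤ 1 ∧ r = ∫ t in Ioc 0 T, f t (u t)}
      √(∫ t in Ioc 0 T, ‖f t‖ ^ 2) := by
  obtain ⟨w, hw, hfw⟩ := P.exists_memL2X_ae_eq_innerSL hf
  have h_pair :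
      ∀ u : ∀ t, X t, ∫ t in Ioc 0 T, f t (u t) = ∫ t in Ioc 0 T, ⟪w t, u t⟫_ℝ :=
    fun u => integral_congr_ae (hfw.mono fun t ht => by simp [ht])
  have h_norm : ∫ t in Ioc 0 T, ‖f t‖ ^ 2 = ∫ t in Ioc 0 T, ‖w t‖ ^ 2 :=
    integral_congr_ae (hfw.mono fun t ht => by simp [ht])
  rw [h_norm]
  set N := √(∫ t in Ioc 0 T, ‖w t‖ ^ 2)
  have hN0 : 0 ≤ N := Real.sqrt_nonneg _
  have hN : ∫ t in Ioc 0 T, ‖w t‖ ^ 2 = N ^ 2 :=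
    (Real.sq_sqrt (integral_nonneg fun t => sq_nonneg _)).symm
  refine IsGreatest.isLUB ⟨⟨N⁻¹ • w, hw.const_smul _, ?_, ?_⟩, ?_⟩
  · simp only [Pi.smul_apply, norm_smul, mul_pow, integral_const_mul, Real.norm_eq_abs, sq_abs]
    rw [hN, ← mul_pow, Real.sqrt_sq (by positivity)]
    exact inv_mul_le_one_of_le₀ le_rfl hN0
  · simp only [h_pair, Pi.smul_apply, real_inner_smul_right, integral_const_mul,
      real_inner_self_eq_norm_sq]
    rw [hN, sq, ← mul_assoc]
    rcases eq_or_ne N 0 with h0 | h0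
    · simp [h0]
    · rw [inv_mul_cancel₀ h0, one_mul]
  · rintro _ ⟨u, hu, hu_le, rfl⟩
    calc ∫ t in Ioc 0 T, f t (u t) ≤ |∫ t in Ioc 0 T, ⟪w t, u t⟫_ℝ| :=
          (h_pair u).le.trans (le_abs_self _)
      _ ≤ N * √(∫ t in Ioc 0 T, ‖u t‖ ^ 2) := hw.abs_integral_inner_le hu
      _ ≤ N := mul_le_of_le_one_right (Real.sqrt_nonneg _) hu_le

end CompatiblePair

theorem stmt7_general (T : ℝ) (X : ℝ → Type*) [∀ t, NormedAddCommGroup (X t)]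
    [∀ t, InnerProductSpace ℝ (X t)] [∀ t, CompleteSpace (X t)]
    [∀ t, TopologicalSpace.SeparableSpace (X t)] (P : CompatiblePair T X) :
    -- `J f` is a well-defined functional on `L²_X`: the pairing is integrable
    (∀ (f : ∀ t, StrongDual ℝ (X t)) (u : ∀ t, X t),
      P.MemL2Xstar f → P.MemL2X u → IntegrableOn (fun t => f t (u t)) (Ioc 0 T)) ∧
    -- `J` is linear
    (∀ f g : ∀ t, StrongDual ℝ (X t), P.MemL2Xstar f → P.MemL2Xstar g →
      ∀ u : ∀ t, X t, P.MemL2X u →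
        (∫ t in Ioc (0:ℝ) T, (f t + g t) (u t))
          = (∫ t in Ioc (0:ℝ) T, f t (u t)) + ∫ t in Ioc (0:ℝ) T, g t (u t)) ∧
    (∀ (c : ℝ) (f : ∀ t, StrongDual ℝ (X t)), P.MemL2Xstar f →
      ∀ u : ∀ t, X t, P.MemL2X u →
        (∫ t in Ioc (0:ℝ) T, (c • f t) (u t)) = c * ∫ t in Ioc (0:ℝ) T, f t (u t)) ∧
    -- `J` is injective (up to a.e. equivalence in `L²_{X*}`)
    (∀ f : ∀ t, StrongDual ℝ (X t), P.MemL2Xstar f →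
      (∀ u : ∀ t, X t, P.MemL2X u → (∫ t in Ioc (0:ℝ) T, f t (u t)) = 0) →
      ∀ᵐ t ∂(volume.restrict (Ioc (0:ℝ) T)), f t = 0) ∧
    -- `J` is surjective: every bounded linear functional on `L²_X` is represented
    (∀ F : (∀ t, X t) → ℝ,
      (∀ u v : ∀ t, X t, P.MemL2X u → P.MemL2X v → F (u + v) = F u + F v) →
      (∀ (c : ℝ) (u : ∀ t, X t), P.MemL2X u → F (c • u) = c * F u) →
      (∃ M : ℝ, ∀ u : ∀ t, X t, P.MemL2X u →
        |F u| ≤ M * Real.sqrt (∫ t in Ioc (0:ℝ) T, ‖u t‖ ^ 2)) →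
      ∃ f : ∀ t, StrongDual ℝ (X t), P.MemL2Xstar f ∧
        ∀ u : ∀ t, X t, P.MemL2X u → F u = ∫ t in Ioc (0:ℝ) T, f t (u t)) ∧
    -- `J` is an isometry: the operator norm of `J f` over the unit ball of `L²_X`
    -- equals the `L²_{X*}` norm of `f`
    (∀ f : ∀ t, StrongDual ℝ (X t), P.MemL2Xstar f →
      IsLUB {r : ℝ | ∃ u : ∀ t, X t, P.MemL2X u ∧
          Real.sqrt (∫ t in Ioc (0:ℝ) T, ‖u t‖ ^ 2) ≤ 1 ∧
          r = ∫ t in Ioc (0:ℝ) T, f t (u t)}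
        (Real.sqrt (∫ t in Ioc (0:ℝ) T, ‖f t‖ ^ 2))) := by
  refine ⟨fun f u hf hu => P.integrable_apply hf hu,
    fun f g hf hg u hu => ?_, fun c f _ u _ => ?_,
    fun f hf hz => P.ae_eq_zero_of_forall_integral_eq_zero hf hz,
    fun F hadd hsmul ⟨M, hM⟩ => P.exists_memL2Xstar_eq_integral hadd hM hsmul,
    fun f hf => P.isLUB_integral_apply hf⟩
  · simp only [FunLike.coe_add, Pi.add_apply]
    exact integral_add (P.integrable_apply hf hu) (P.integrable_apply hg hu)
  · simp only [FunLike.coe_smul, Pi.smul_apply, smul_eq_mul]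
    exact integral_const_mul c _

theorem stmt7 (T : ℝ) (hT : 0 < T) (X : ℝ → Type*) [∀ t, NormedAddCommGroup (X t)]
    [∀ t, InnerProductSpace ℝ (X t)] [∀ t, CompleteSpace (X t)]
    [∀ t, TopologicalSpace.SeparableSpace (X t)] (P : CompatiblePair T X) :
    -- `J f` is a well-defined functional on `L²_X`: the pairing is integrable
    (∀ (f : ∀ t, StrongDual ℝ (X t)) (u : ∀ t, X t),
      P.MemL2Xstar f → P.MemL2X u → IntegrableOn (fun t => f t (u t)) (Ioc 0 T)) ∧
    -- `J` is linear
    (∀ f g : ∀ t, StrongDual ℝ (X t), P.MemL2Xstar f → P.MemL2Xstar g →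
      ∀ u : ∀ t, X t, P.MemL2X u →
        (∫ t in Ioc (0:ℝ) T, (f t + g t) (u t))
          = (∫ t in Ioc (0:ℝ) T, f t (u t)) + ∫ t in Ioc (0:ℝ) T, g t (u t)) ∧
    (∀ (c : ℝ) (f : ∀ t, StrongDual ℝ (X t)), P.MemL2Xstar f →
      ∀ u : ∀ t, X t, P.MemL2X u →
        (∫ t in Ioc (0:ℝ) T, (c • f t) (u t)) = c * ∫ t in Ioc (0:ℝ) T, f t (u t)) ∧
    -- `J` is injective (up to a.e. equivalence in `L²_{X*}`)
    (∀ f : ∀ t, StrongDual ℝ (X t), P.MemL2Xstar f →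
      (∀ u : ∀ t, X t, P.MemL2X u → (∫ t in Ioc (0:ℝ) T, f t (u t)) = 0) →
      ∀ᵐ t ∂(volume.restrict (Ioc (0:ℝ) T)), f t = 0) ∧
    -- `J` is surjective: every bounded linear functional on `L²_X` is represented
    (∀ F : (∀ t, X t) → ℝ,
      (∀ u v : ∀ t, X t, P.MemL2X u → P.MemL2X v → F (u + v) = F u + F v) →
      (∀ (c : ℝ) (u : ∀ t, X t), P.MemL2X u → F (c • u) = c * F u) →
      (∃ M : ℝ, ∀ u : ∀ t, X t, P.MemL2X u →
        |F u| ≤ M * Real.sqrt (∫ t in Ioc (0:ℝ) T, ‖u t‖ ^ 2)) →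
      ∃ f : ∀ t, StrongDual ℝ (X t), P.MemL2Xstar f ∧
        ∀ u : ∀ t, X t, P.MemL2X u → F u = ∫ t in Ioc (0:ℝ) T, f t (u t)) ∧
    -- `J` is an isometry: the operator norm of `J f` over the unit ball of `L²_X`
    -- equals the `L²_{X*}` norm of `f`
    (∀ f : ∀ t, StrongDual ℝ (X t), P.MemL2Xstar f →
      IsLUB {r : ℝ | ∃ u : ∀ t, X t, P.MemL2X u ∧
          Real.sqrt (∫ t in Ioc (0:ℝ) T, ‖u t‖ ^ 2) ≤ 1 ∧
          r = ∫ t in Ioc (0:ℝ) T, f t (u t)}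
        (Real.sqrt (∫ t in Ioc (0:ℝ) T, ‖f t‖ ^ 2))) :=
  stmt7_general T X P
end
end

section
/- Under the stated assumptions, for all u, v ∈ L²_H the map t ↦ λ(t; u(t), v(t)) is measurable on [0,T], and there is a constant C independent of t such that |λ(t; u, v)| ≤ C‖u‖_{H(t)}‖v‖_{H(t)} for all u, v ∈ H(t) and all t ∈ [0,T]. -/
open MeasureTheory Set Filter Topology

noncomputable section

variable {T : ℝ} {X : ℝ → Type*} [∀ t, NormedAddCommGroup (X t)]
  [∀ t, InnerProductSpace ℝ (X t)]

/-- The `L²(0,T)`-type norm of a (possibly `t`-dependent) family of vectors. -/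
def l2n (T : ℝ) {Y : ℝ → Type*} [∀ t, NormedAddCommGroup (Y t)] (u : ∀ t, Y t) : ℝ :=
  Real.sqrt (∫ t in Ioc (0:ℝ) T, ‖u t‖ ^ 2)

/-- The `W`-type norm built from a function and its (weak material) derivative. -/
def wn (T : ℝ) {Y Z : ℝ → Type*} [∀ t, NormedAddCommGroup (Y t)]
    [∀ t, NormedAddCommGroup (Z t)] (u : ∀ t, Y t) (g : ∀ t, Z t) : ℝ :=
  Real.sqrt ((∫ t in Ioc (0:ℝ) T, ‖u t‖ ^ 2) + ∫ t in Ioc (0:ℝ) T, ‖g t‖ ^ 2)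

/-- The evolving Gelfand-triple setting: compatible pairs `(V, φ|_{V₀})` and `(H, φ)`,
with `V(t) ⊂ H(t)` continuously and densely (via `ι t`), together with the
differentiability assumptions on `t ↦ ‖φ_t u₀‖²_{H(t)}` (Assumptions 2.21/2.31 of the paper). -/
structure EvolvingGelfand (T : ℝ) (V H : ℝ → Type*)
    [∀ t, NormedAddCommGroup (V t)] [∀ t, InnerProductSpace ℝ (V t)]
    [∀ t, NormedAddCommGroup (H t)] [∀ t, InnerProductSpace ℝ (H t)] where
  PV : CompatiblePair T V
  PH : CompatiblePair T H
  ι : ∀ t, V t →L[ℝ] H t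
  ι_inj : ∀ t, Function.Injective (ι t)
  ι_dense : ∀ t, DenseRange (ι t)
  ι_compat : ∀ (t : ℝ) (v : V 0), ι t (PV.φ t v) = PH.φ t (ι 0 v)
  θ : ℝ → H 0 → ℝ
  θ_hasDeriv : ∀ u₀ : H 0, ∀ t ∈ Icc (0:ℝ) T,
    HasDerivWithinAt (fun s => ‖PH.φ s u₀‖ ^ 2) (θ t u₀) (Icc (0:ℝ) T) t
  θ_cont : ∀ t ∈ Icc (0:ℝ) T, Continuous (θ t)
  Cθ : ℝ
  θ_bound : ∀ t ∈ Icc (0:ℝ) T, ∀ u₀ v₀ : H 0,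
    |θ t (u₀ + v₀) - θ t (u₀ - v₀)| ≤ Cθ * ‖u₀‖ * ‖v₀‖

namespace EvolvingGelfand

variable {T : ℝ} {V H : ℝ → Type*}
  [∀ t, NormedAddCommGroup (V t)] [∀ t, InnerProductSpace ℝ (V t)]
  [∀ t, NormedAddCommGroup (H t)] [∀ t, InnerProductSpace ℝ (H t)]

/-- The bilinear form `λ̂(t;·,·)` on `H₀`. -/
def lamHat (E : EvolvingGelfand T V H) (t : ℝ) (u₀ v₀ : H 0) : ℝ :=
  (E.θ t (u₀ + v₀) - E.θ t (u₀ - v₀)) / 4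

/-- The bilinear form `λ(t;·,·)` on `H(t)`. -/
def lam (E : EvolvingGelfand T V H) (t : ℝ) (u v : H t) : ℝ :=
  E.lamHat t ((E.PH.φ t).symm u) ((E.PH.φ t).symm v)

/-- The embedding `H(t) ⊂ V(t)*` of the Gelfand triple: `h ↦ (h, ι t ·)_{H(t)}`. -/
def embed (E : EvolvingGelfand T V H) (t : ℝ) (h : H t) : StrongDual ℝ (V t) :=
  (innerSL ℝ h).comp (E.ι t)

/-- `g ∈ L²_{V*}` is the weak material derivative of `u ∈ L²_V`. Test functions
`η ∈ D_V(0,T)` are parametrised by their pullbacks `η₀ ∈ C_c^∞((0,T);V₀)`,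
so that `η(t) = φ_t η₀(t)` and `∂•η(t) = φ_t η₀'(t)`. -/
def IWMD (E : EvolvingGelfand T V H) (u : ∀ t, V t)
    (g : ∀ t, StrongDual ℝ (V t)) : Prop :=
  ∀ η₀ : ℝ → V 0, ContDiff ℝ (⊤ : ℕ∞) η₀ → tsupport η₀ ⊆ Ioo (0:ℝ) T →
    (∫ t in Ioc (0:ℝ) T, g t (E.PV.φ t (η₀ t)))
      = -(∫ t in Ioc (0:ℝ) T,
            (inner ℝ (E.ι t (u t)) (E.ι t (E.PV.φ t (deriv η₀ t))) : ℝ))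
        - ∫ t in Ioc (0:ℝ) T, E.lam t (E.ι t (u t)) (E.ι t (E.PV.φ t (η₀ t)))

/-- `v' ∈ L²(0,T;V₀*)` is the weak derivative of `v ∈ L²(0,T;V₀)` in the
Gelfand triple `V₀ ⊂ H₀ ⊂ V₀*`. -/
def HWD0 (E : EvolvingGelfand T V H) (v : ℝ → V 0)
    (v' : ℝ → StrongDual ℝ (V 0)) : Prop :=
  ∀ ζ : ℝ → ℝ, ContDiff ℝ (⊤ : ℕ∞) ζ → tsupport ζ ⊆ Ioo (0:ℝ) T → ∀ w : V 0,
    (∫ t in Ioc (0:ℝ) T, deriv ζ t * (inner ℝ (E.ι 0 (v t)) (E.ι 0 w) : ℝ))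
      = -∫ t in Ioc (0:ℝ) T, ζ t * v' t w

/-- The evolving space equivalence between `W(V,V*)` and `𝒲(V₀,V₀*)`,
including the two-sided norm equivalence. -/
def ESE (E : EvolvingGelfand T V H) : Prop :=
  (∀ u : ∀ t, V t, E.PV.MemL2X u →
    ((∃ g, E.PV.MemL2Xstar g ∧ E.IWMD u g) ↔
      (∃ v', MemLp v' 2 (volume.restrict (Ioc (0:ℝ) T)) ∧
        E.HWD0 (fun t => (E.PV.φ t).symm (u t)) v'))) ∧
  ∃ C₁ C₂ : ℝ, 0 < C₁ ∧ 0 < C₂ ∧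
    ∀ (u : ∀ t, V t) (g : ∀ t, StrongDual ℝ (V t))
      (v' : ℝ → StrongDual ℝ (V 0)),
      E.PV.MemL2X u → E.PV.MemL2Xstar g → E.IWMD u g →
      MemLp v' 2 (volume.restrict (Ioc (0:ℝ) T)) →
      E.HWD0 (fun t => (E.PV.φ t).symm (u t)) v' →
        C₁ * wn T (fun t => (E.PV.φ t).symm (u t)) v' ≤ wn T u g ∧
        wn T u g ≤ C₂ * wn T (fun t => (E.PV.φ t).symm (u t)) v'

end EvolvingGelfand

/-! For fixed `u₀`, `t ↦ θ t u₀` is a derivative, so on `[0, T)` it coincides with the right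
derivative `t ↦ derivWithin _ (Ici t) t`, which is Borel measurable for any function. Being also
continuous in `u₀`, `θ` is a Carathéodory function, so `t ↦ θ t (w t)` is measurable whenever `w`
is; `λ` is a combination of two such maps. The bound on `λ` is `θ_bound` transported through the
uniform bound on `φ_{-t}`. -/

theorem stronglyMeasurable_indicator_Ico_of_hasDerivWithinAt_Icc {F : Type*}
    [NormedAddCommGroup F] [NormedSpace ℝ F] [CompleteSpace F] {f f' : ℝ → F} {a b : ℝ}
    (hf : ∀ t ∈ Ico a b, HasDerivWithinAt f (f' t) (Icc a b) t) :
    StronglyMeasurable ((Ico a b).indicator f') := by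
  have hderiv : EqOn (fun t => derivWithin f (Ici t) t) f' (Ico a b) := fun t ht =>
    ((hf t ht).mono_of_mem_nhdsWithin (mem_of_superset (Icc_mem_nhdsGE ht.2)
      (Icc_subset_Icc_left ht.1))).derivWithin (uniqueDiffWithinAt_Ici t)
  rw [← indicator_congr hderiv]
  exact (stronglyMeasurable_derivWithin_Ici f).indicator measurableSet_Ico

theorem aestronglyMeasurable_comp_of_continuous_of_stronglyMeasurable_indicator
    {α X β : Type*} [MeasurableSpace α] {μ : Measure α} {s : Set α}
    [TopologicalSpace X] [TopologicalSpace.MetrizableSpace X] [SecondCountableTopology X]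
    [MeasurableSpace X] [OpensMeasurableSpace X]
    [TopologicalSpace β] [TopologicalSpace.PseudoMetrizableSpace β] [Zero β]
    {f : α → X → β} (hs : MeasurableSet s) (hcont : ∀ a ∈ s, Continuous (f a))
    (hmeas : ∀ x, StronglyMeasurable (s.indicator (f · x)))
    {w : α → X} (hw : AEMeasurable w (μ.restrict s)) :
    AEStronglyMeasurable (fun a => f a (w a)) (μ.restrict s) := by
  set g : X → α → β := fun x => s.indicator (f · x)
  have hg_cont : ∀ a, Continuous fun x => g x a := by
    intro a
    by_cases ha : a ∈ s
    · simpa only [g, indicator_of_mem ha] using hcont a ha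
    · simpa only [g, indicator_of_notMem ha] using continuous_const
  have hg : StronglyMeasurable (Function.uncurry g) :=
    stronglyMeasurable_uncurry_of_continuous_of_stronglyMeasurable hg_cont hmeas
  refine (hg.aestronglyMeasurable.comp_aemeasurable (hw.prodMk aemeasurable_id)).congr ?_
  filter_upwards [ae_restrict_mem hs] with a ha
  simp only [Function.comp, Function.uncurry, g, id, indicator_of_mem ha]

namespace EvolvingGelfand

variable {T : ℝ} {V H : ℝ → Type*}
  [∀ t, NormedAddCommGroup (V t)] [∀ t, InnerProductSpace ℝ (V t)]
  [∀ t, NormedAddCommGroup (H t)] [∀ t, InnerProductSpace ℝ (H t)]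
  (E : EvolvingGelfand T V H)

theorem stronglyMeasurable_indicator_θ (x : H 0) :
    StronglyMeasurable ((Ico (0:ℝ) T).indicator (E.θ · x)) :=
  stronglyMeasurable_indicator_Ico_of_hasDerivWithinAt_Icc fun t ht =>
    E.θ_hasDeriv x t (Ico_subset_Icc_self ht)

theorem aestronglyMeasurable_θ_comp [TopologicalSpace.SeparableSpace (H 0)] {w : ℝ → H 0}
    (hw : AEStronglyMeasurable w (volume.restrict (Ioc (0:ℝ) T))) :
    AEStronglyMeasurable (fun t => E.θ t (w t)) (volume.restrict (Ioc (0:ℝ) T)) := by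
  borelize (H 0)
  rw [← Measure.restrict_congr_set Ico_ae_eq_Ioc] at hw ⊢
  exact aestronglyMeasurable_comp_of_continuous_of_stronglyMeasurable_indicator
    measurableSet_Ico (fun t ht => E.θ_cont t (Ico_subset_Icc_self ht))
    E.stronglyMeasurable_indicator_θ hw.aemeasurable

theorem abs_lamHat_le {t : ℝ} (ht : t ∈ Icc (0:ℝ) T) (a b : H 0) :
    |E.lamHat t a b| ≤ |E.Cθ| / 4 * ‖a‖ * ‖b‖ := by
  rw [lamHat, abs_div, abs_of_pos (by norm_num : (0:ℝ) < 4)]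
  have hθ := E.θ_bound t ht a b
  have hCθ : E.Cθ * ‖a‖ * ‖b‖ ≤ |E.Cθ| * ‖a‖ * ‖b‖ := by gcongr; exact le_abs_self _
  linarith

theorem abs_lam_le {t : ℝ} (ht : t ∈ Icc (0:ℝ) T) (u v : H t) :
    |E.lam t u v| ≤ |E.Cθ| / 4 * E.PH.C ^ 2 * ‖u‖ * ‖v‖ :=
  calc |E.lam t u v|
      ≤ |E.Cθ| / 4 * ‖(E.PH.φ t).symm u‖ * ‖(E.PH.φ t).symm v‖ := E.abs_lamHat_le ht _ _
    _ ≤ |E.Cθ| / 4 * (E.PH.C * ‖u‖) * (E.PH.C * ‖v‖) := by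
        have hC := E.PH.C_pos
        gcongr
        exacts [E.PH.norm_symm_le t ht u, E.PH.norm_symm_le t ht v]
    _ = |E.Cθ| / 4 * E.PH.C ^ 2 * ‖u‖ * ‖v‖ := by ring

end EvolvingGelfand

theorem stmt8_general (T : ℝ) (V H : ℝ → Type*)
    [∀ t, NormedAddCommGroup (V t)] [∀ t, InnerProductSpace ℝ (V t)]
    [∀ t, NormedAddCommGroup (H t)] [∀ t, InnerProductSpace ℝ (H t)]
    [∀ t, TopologicalSpace.SeparableSpace (H t)]
    (E : EvolvingGelfand T V H) :
    -- for `u, v ∈ L²_H` the map `t ↦ λ(t; u(t), v(t))` is measurable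
    (∀ u v : ∀ t, H t, E.PH.MemL2X u → E.PH.MemL2X v →
      AEMeasurable (fun t => E.lam t (u t) (v t)) (volume.restrict (Ioc (0:ℝ) T))) ∧
    -- `λ(t;·,·)` is bounded independently of `t`
    (∃ C : ℝ, 0 ≤ C ∧ ∀ t ∈ Icc (0:ℝ) T, ∀ u v : H t,
      |E.lam t u v| ≤ C * ‖u‖ * ‖v‖) := by
  refine ⟨fun u v hu hv => ?_, ⟨_, by positivity, fun t ht => E.abs_lam_le ht⟩⟩
  have hsum := E.aestronglyMeasurable_θ_comp (hu.1.add hv.1)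
  have hdiff := E.aestronglyMeasurable_θ_comp (hu.1.sub hv.1)
  exact (hsum.aemeasurable.sub hdiff.aemeasurable).div_const 4

theorem stmt8 (T : ℝ) (hT : 0 < T) (V H : ℝ → Type*)
    [∀ t, NormedAddCommGroup (V t)] [∀ t, InnerProductSpace ℝ (V t)]
    [∀ t, NormedAddCommGroup (H t)] [∀ t, InnerProductSpace ℝ (H t)]
    [∀ t, CompleteSpace (V t)] [∀ t, TopologicalSpace.SeparableSpace (V t)]
    [∀ t, CompleteSpace (H t)] [∀ t, TopologicalSpace.SeparableSpace (H t)]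
    (E : EvolvingGelfand T V H) :
    -- for `u, v ∈ L²_H` the map `t ↦ λ(t; u(t), v(t))` is measurable
    (∀ u v : ∀ t, H t, E.PH.MemL2X u → E.PH.MemL2X v →
      AEMeasurable (fun t => E.lam t (u t) (v t)) (volume.restrict (Ioc (0:ℝ) T))) ∧
    -- `λ(t;·,·)` is bounded independently of `t`
    (∃ C : ℝ, 0 ≤ C ∧ ∀ t ∈ Icc (0:ℝ) T, ∀ u v : H t,
      |E.lam t u v| ≤ C * ‖u‖ * ‖v‖) :=
  stmt8_general T V H E
end
end

section
/- Under the stated assumptions, define b̂(t;u₀,v₀) := (φ_t u₀, φ_t v₀)_{H(t)} for u₀, v₀ ∈ H₀. Then for all σ₁, σ₂ ∈ C¹([0,T];H₀), the map t ↦ b̂(t;σ₁(t),σ₂(t)) is classically differentiable on [0,T] and (d/dt) b̂(t;σ₁(t),σ₂(t)) = b̂(t;σ₁′(t),σ₂(t)) + b̂(t;σ₁(t),σ₂′(t)) + λ̂(t;σ₁(t),σ₂(t)). -/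
open MeasureTheory Set Filter Topology

noncomputable section

variable {T : ℝ} {X : ℝ → Type*} [∀ t, NormedAddCommGroup (X t)]
  [∀ t, InnerProductSpace ℝ (X t)]

/-!
Polarization reduces `⟪φ_s σ₁(s), φ_s σ₂(s)⟫` to the two squared norms `‖φ_s (σ₁ ± σ₂)(s)‖²`,
so it suffices to differentiate `s ↦ ‖φ_s σ(s)‖²` along a differentiable curve `σ`. Writing
`‖φ_s σ(s)‖² = ‖φ_s σ(t)‖² + ⟪φ_s (σ(s) - σ(t)), φ_s (σ(s) + σ(t))⟫`, the first term has derivative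
`θ(t, σ(t))` by assumption, and the difference quotient of the second is
`⟪φ_s (slope σ t s), φ_s (σ(s) + σ(t))⟫`, which tends to `2 ⟪φ_t σ'(t), φ_t σ(t)⟫` because the
uniform bound on `φ_s` makes `(s, u, v) ↦ ⟪φ_s u, φ_s v⟫` jointly continuous.
-/

theorem real_inner_eq_norm_add_sq_sub_norm_sub_sq_div_four {E : Type*} [NormedAddCommGroup E]
    [InnerProductSpace ℝ E] (x y : E) :
    (inner ℝ x y : ℝ) = (‖x + y‖ ^ 2 - ‖x - y‖ ^ 2) / 4 := by
  rw [norm_add_sq_real, norm_sub_sq_real]; ring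

namespace CompatiblePair

variable (P : CompatiblePair T X)

theorem inner_map_eq (s : ℝ) (u v : X 0) :
    (inner ℝ (P.φ s u) (P.φ s v) : ℝ) = (‖P.φ s (u + v)‖ ^ 2 - ‖P.φ s (u - v)‖ ^ 2) / 4 := by
  rw [real_inner_eq_norm_add_sq_sub_norm_sub_sq_div_four, map_add, map_sub]

theorem continuousOn_inner_map_s9 (u v : X 0) :
    ContinuousOn (fun s => (inner ℝ (P.φ s u) (P.φ s v) : ℝ)) (Icc 0 T) := by
  simp only [P.inner_map_eq]
  exact (((P.continuous_norm _).pow 2).sub ((P.continuous_norm _).pow 2)).div_const 4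

theorem abs_inner_map_le {s : ℝ} (hs : s ∈ Icc 0 T) (u v : X 0) :
    |(inner ℝ (P.φ s u) (P.φ s v) : ℝ)| ≤ P.C ^ 2 * (‖u‖ * ‖v‖) :=
  calc |(inner ℝ (P.φ s u) (P.φ s v) : ℝ)| ≤ ‖P.φ s u‖ * ‖P.φ s v‖ := abs_real_inner_le_norm _ _
    _ ≤ (P.C * ‖u‖) * (P.C * ‖v‖) :=
        mul_le_mul (P.norm_map_le s hs u) (P.norm_map_le s hs v) (norm_nonneg _)
          (mul_nonneg P.C_pos.le (norm_nonneg _))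
    _ = P.C ^ 2 * (‖u‖ * ‖v‖) := by ring

variable {P}

theorem tendsto_inner_map_zero {l : Filter ℝ} (hl : ∀ᶠ s in l, s ∈ Icc 0 T)
    {x y : ℝ → X 0} {b : X 0} (hx : Tendsto x l (𝓝 0)) (hy : Tendsto y l (𝓝 b)) :
    Tendsto (fun s => (inner ℝ (P.φ s (x s)) (P.φ s (y s)) : ℝ)) l (𝓝 0) := by
  refine squeeze_zero_norm' ?_ (a := fun s => P.C ^ 2 * (‖x s‖ * ‖y s‖)) ?_
  · filter_upwards [hl] with s hs using P.abs_inner_map_le hs _ _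
  · simpa using (hx.norm.mul hy.norm).const_mul (P.C ^ 2)

theorem tendsto_inner_map {t : ℝ} (ht : t ∈ Icc 0 T) {l : Filter ℝ} (hl : l ≤ 𝓝[Icc 0 T] t)
    {x y : ℝ → X 0} {a b : X 0} (hx : Tendsto x l (𝓝 a)) (hy : Tendsto y l (𝓝 b)) :
    Tendsto (fun s => (inner ℝ (P.φ s (x s)) (P.φ s (y s)) : ℝ)) l
      (𝓝 (inner ℝ (P.φ t a) (P.φ t b))) := by
  have hIcc : ∀ᶠ s in l, s ∈ Icc 0 T := hl self_mem_nhdsWithin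
  have hxa : Tendsto (fun s => x s - a) l (𝓝 0) := by simpa using hx.sub_const a
  have hyb : Tendsto (fun s => y s - b) l (𝓝 0) := by simpa using hy.sub_const b
  have hsplit : ∀ s, (inner ℝ (P.φ s (x s)) (P.φ s (y s)) : ℝ) =
      inner ℝ (P.φ s (x s - a)) (P.φ s (y s)) + inner ℝ (P.φ s (y s - b)) (P.φ s a)
        + inner ℝ (P.φ s a) (P.φ s b) := by
    intro s
    simp only [map_sub, inner_sub_left, inner_sub_right, real_inner_comm (P.φ s a)]
    ring
  simp only [hsplit]
  simpa using ((tendsto_inner_map_zero hIcc hxa hy).add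
    (tendsto_inner_map_zero hIcc hyb tendsto_const_nhds)).add
    ((P.continuousOn_inner_map_s9 a b t ht).mono_left hl)

theorem hasDerivWithinAt_inner_map_of_eq_zero {t : ℝ} (ht : t ∈ Icc 0 T) {f y : ℝ → X 0}
    {f' : X 0} (hf : HasDerivWithinAt f f' (Icc 0 T) t) (hft : f t = 0)
    (hy : ContinuousWithinAt y (Icc 0 T) t) :
    HasDerivWithinAt (fun s => (inner ℝ (P.φ s (f s)) (P.φ s (y s)) : ℝ))
      (inner ℝ (P.φ t f') (P.φ t (y t))) (Icc 0 T) t := by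
  rw [hasDerivWithinAt_iff_tendsto_slope] at hf ⊢
  have hslope : ∀ s, slope (fun s => (inner ℝ (P.φ s (f s)) (P.φ s (y s)) : ℝ)) t s =
      inner ℝ (P.φ s (slope f t s)) (P.φ s (y s)) := by
    intro s
    simp only [slope_def_module, hft, map_zero, inner_zero_left, sub_zero, map_smul,
      real_inner_smul_left, smul_eq_mul]
  exact (tendsto_inner_map ht (nhdsWithin_mono t sdiff_subset) hf
    (hy.mono_left (nhdsWithin_mono t sdiff_subset))).congr fun s => (hslope s).symm

theorem hasDerivWithinAt_norm_map_sq {t : ℝ} (ht : t ∈ Icc 0 T) {σ : ℝ → X 0} {σ' : X 0}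
    (hσ : HasDerivWithinAt σ σ' (Icc 0 T) t) {θ₀ : ℝ}
    (hθ : HasDerivWithinAt (fun s => ‖P.φ s (σ t)‖ ^ 2) θ₀ (Icc 0 T) t) :
    HasDerivWithinAt (fun s => ‖P.φ s (σ s)‖ ^ 2)
      (θ₀ + 2 * inner ℝ (P.φ t σ') (P.φ t (σ t))) (Icc 0 T) t := by
  have hdecomp : ∀ s, ‖P.φ s (σ s)‖ ^ 2 =
      ‖P.φ s (σ t)‖ ^ 2 + inner ℝ (P.φ s (σ s - σ t)) (P.φ s (σ s + σ t)) := by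
    intro s
    rw [map_sub, map_add, inner_sub_left, inner_add_right, inner_add_right,
      real_inner_self_eq_norm_sq, real_inner_self_eq_norm_sq, real_inner_comm (P.φ s (σ t))]
    ring
  have hrest := hasDerivWithinAt_inner_map_of_eq_zero (P := P) (y := fun s => σ s + σ t) ht (hσ.sub_const (σ t)) (sub_self _)
    (hσ.continuousWithinAt.add continuousWithinAt_const)
  rw [← two_smul ℝ (σ t), map_smul, real_inner_smul_right] at hrest
  exact (hθ.add hrest).congr (fun s _ => hdecomp s) (hdecomp t)

end CompatiblePair

theorem stmt9_general (T : ℝ) (H : ℝ → Type*)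
    [∀ t, NormedAddCommGroup (H t)] [∀ t, InnerProductSpace ℝ (H t)]
    (P : CompatiblePair T H)
    -- Assumptions 2.21: `θ(t,u₀) = (d/dt)‖φ_t u₀‖²` exists classically, is continuous in
    -- `u₀`, and satisfies the polarisation bound uniformly in `t`
    (θ : ℝ → H 0 → ℝ)
    (hθ_deriv : ∀ u₀ : H 0, ∀ t ∈ Icc (0:ℝ) T,
      HasDerivWithinAt (fun s => ‖P.φ s u₀‖ ^ 2) (θ t u₀) (Icc (0:ℝ) T) t)
    -- `σ₁, σ₂ ∈ C¹([0,T];H₀)` with derivatives `σ₁', σ₂'`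
    (σ₁ σ₂ σ₁' σ₂' : ℝ → H 0)
    (hσ₁ : ∀ t ∈ Icc (0:ℝ) T, HasDerivWithinAt σ₁ (σ₁' t) (Icc (0:ℝ) T) t)
    (hσ₂ : ∀ t ∈ Icc (0:ℝ) T, HasDerivWithinAt σ₂ (σ₂' t) (Icc (0:ℝ) T) t) :
    -- `t ↦ b̂(t;σ₁(t),σ₂(t)) = (φ_t σ₁(t), φ_t σ₂(t))_{H(t)}` is classically
    -- differentiable with the product-rule formula involving `λ̂`
    ∀ t ∈ Icc (0:ℝ) T,
      HasDerivWithinAt (fun s => (inner ℝ (P.φ s (σ₁ s)) (P.φ s (σ₂ s)) : ℝ))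
        ((inner ℝ (P.φ t (σ₁' t)) (P.φ t (σ₂ t)) : ℝ)
          + (inner ℝ (P.φ t (σ₁ t)) (P.φ t (σ₂' t)) : ℝ)
          + (θ t (σ₁ t + σ₂ t) - θ t (σ₁ t - σ₂ t)) / 4)
        (Icc (0:ℝ) T) t := by
  intro t ht
  have hplus := P.hasDerivWithinAt_norm_map_sq ht (σ := fun s => σ₁ s + σ₂ s)
    ((hσ₁ t ht).add (hσ₂ t ht)) (hθ_deriv (σ₁ t + σ₂ t) t ht)
  have hminus := P.hasDerivWithinAt_norm_map_sq ht (σ := fun s => σ₁ s - σ₂ s)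
    ((hσ₁ t ht).sub (hσ₂ t ht)) (hθ_deriv (σ₁ t - σ₂ t) t ht)
  rw [show (fun s => (inner ℝ (P.φ s (σ₁ s)) (P.φ s (σ₂ s)) : ℝ)) = fun s =>
      (‖P.φ s (σ₁ s + σ₂ s)‖ ^ 2 - ‖P.φ s (σ₁ s - σ₂ s)‖ ^ 2) / 4 from
    funext fun s => P.inner_map_eq s _ _]
  refine ((hplus.sub hminus).div_const 4).congr_deriv ?_
  simp only [map_add, map_sub, inner_add_left, inner_add_right, inner_sub_left,
    inner_sub_right, real_inner_comm (P.φ t (σ₂' t))]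
  ring

theorem stmt9 (T : ℝ) (hT : 0 < T) (H : ℝ → Type*)
    [∀ t, NormedAddCommGroup (H t)] [∀ t, InnerProductSpace ℝ (H t)]
    [∀ t, CompleteSpace (H t)] [∀ t, TopologicalSpace.SeparableSpace (H t)]
    (P : CompatiblePair T H)
    -- Assumptions 2.21: `θ(t,u₀) = (d/dt)‖φ_t u₀‖²` exists classically, is continuous in
    -- `u₀`, and satisfies the polarisation bound uniformly in `t`
    (θ : ℝ → H 0 → ℝ)
    (hθ_deriv : ∀ u₀ : H 0, ∀ t ∈ Icc (0:ℝ) T,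
      HasDerivWithinAt (fun s => ‖P.φ s u₀‖ ^ 2) (θ t u₀) (Icc (0:ℝ) T) t)
    (hθ_cont : ∀ t ∈ Icc (0:ℝ) T, Continuous (θ t))
    (Cθ : ℝ)
    (hθ_bound : ∀ t ∈ Icc (0:ℝ) T, ∀ u₀ v₀ : H 0,
      |θ t (u₀ + v₀) - θ t (u₀ - v₀)| ≤ Cθ * ‖u₀‖ * ‖v₀‖)
    -- `σ₁, σ₂ ∈ C¹([0,T];H₀)` with derivatives `σ₁', σ₂'`
    (σ₁ σ₂ σ₁' σ₂' : ℝ → H 0)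
    (hσ₁ : ∀ t ∈ Icc (0:ℝ) T, HasDerivWithinAt σ₁ (σ₁' t) (Icc (0:ℝ) T) t)
    (hσ₁' : ContinuousOn σ₁' (Icc (0:ℝ) T))
    (hσ₂ : ∀ t ∈ Icc (0:ℝ) T, HasDerivWithinAt σ₂ (σ₂' t) (Icc (0:ℝ) T) t)
    (hσ₂' : ContinuousOn σ₂' (Icc (0:ℝ) T)) :
    -- `t ↦ b̂(t;σ₁(t),σ₂(t)) = (φ_t σ₁(t), φ_t σ₂(t))_{H(t)}` is classically
    -- differentiable with the product-rule formula involving `λ̂`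
    ∀ t ∈ Icc (0:ℝ) T,
      HasDerivWithinAt (fun s => (inner ℝ (P.φ s (σ₁ s)) (P.φ s (σ₂ s)) : ℝ))
        ((inner ℝ (P.φ t (σ₁' t)) (P.φ t (σ₂ t)) : ℝ)
          + (inner ℝ (P.φ t (σ₁ t)) (P.φ t (σ₂' t)) : ℝ)
          + (θ t (σ₁ t + σ₂ t) - θ t (σ₁ t - σ₂ t)) / 4)
        (Icc (0:ℝ) T) t :=
  stmt9_general T H P θ hθ_deriv σ₁ σ₂ σ₁' σ₂' hσ₁ hσ₂
end
end

section
/- Under the stated assumptions, for every η ∈ D_V(0,T) there exists a sequence {η_n} ⊂ D_V(0,T) of the form η_n(t) = Σ_{j=1}^n ζ_j(t) φ_t w_j, with ζ_j ∈ C_c^∞((0,T);ℝ) and w_j ∈ V₀, such that η_n → η in W(V,V*). -/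
open MeasureTheory Set Filter Topology

noncomputable section

variable {T : ℝ} {X : ℝ → Type*} [∀ t, NormedAddCommGroup (X t)]
  [∀ t, InnerProductSpace ℝ (X t)]

/-! Gram–Schmidt applied to a dense sequence `d` of `V₀` yields vectors `e j`, orthonormal up to
zeros, whose partial expansions `P n x = ∑_{j<n} ⟪e j, x⟫ e j` are best approximations of `x` from
`span {d 0, …, d (n-1)}`; by density and compactness, `P n → id` uniformly on compact sets.
With `ζ j t = ⟪e j, η₀ t⟫` and `w j = e j`, the difference `η - η_n` is `φ_t (η₀ t - P n (η₀ t))`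
and its material derivative is `φ_t (η₀' t - P n (η₀' t))`. Both are uniformly small on `[0,T]`
because `η₀` and `η₀'` have compact range, and the uniform bounds on `φ_t` and on the embeddings
`V(t) ⊂ H(t) ⊂ V(t)*` turn this into convergence in `W(V,V*)`. -/

open scoped InnerProductSpace

section PartialExpansion

variable {F : Type*} [NormedAddCommGroup F] [InnerProductSpace ℝ F]

theorem norm_sub_le_of_forall_inner_eq_zero {K : Submodule ℝ F} {x p u : F} (hp : p ∈ K)
    (hxp : ∀ w ∈ K, ⟪x - p, w⟫_ℝ = 0) (hu : u ∈ K) : ‖x - p‖ ≤ ‖x - u‖ := by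
  have hpyth := norm_add_sq_eq_norm_sq_add_norm_sq_real (hxp _ (K.sub_mem hp hu))
  rw [sub_add_sub_cancel] at hpyth
  nlinarith [norm_nonneg (x - p), norm_nonneg (x - u), sq_nonneg ‖p - u‖]

variable {e : ℕ → F} (he : Pairwise fun i j => ⟪e i, e j⟫_ℝ = 0)
  (he₁ : ∀ j, e j ≠ 0 → ‖e j‖ = 1)
include he he₁

theorem inner_sub_sum_inner_smul_eq_zero {n k : ℕ} (hk : k < n) (x : F) :
    ⟪e k, x - ∑ j ∈ Finset.range n, ⟪e j, x⟫_ℝ • e j⟫_ℝ = 0 := by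
  rw [inner_sub_right, inner_sum, Finset.sum_eq_single_of_mem k (Finset.mem_range.2 hk)
    fun j _ hjk => by rw [real_inner_smul_right, he hjk.symm, mul_zero]]
  by_cases hek : e k = 0
  · simp [hek]
  · rw [real_inner_smul_right, real_inner_self_eq_norm_sq, he₁ k hek]
    ring

theorem norm_sub_sum_inner_smul_le {n : ℕ} (x : F) {u : F}
    (hu : u ∈ Submodule.span ℝ (e '' Iio n)) :
    ‖x - ∑ j ∈ Finset.range n, ⟪e j, x⟫_ℝ • e j‖ ≤ ‖x - u‖ := by
  refine norm_sub_le_of_forall_inner_eq_zero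
    (Submodule.sum_mem _ fun j hj => Submodule.smul_mem _ _
      (Submodule.subset_span (mem_image_of_mem e (Finset.mem_range.1 hj)))) (fun w hw => ?_) hu
  have hortho : Submodule.span ℝ (e '' Iio n) ⟂
      Submodule.span ℝ {x - ∑ j ∈ Finset.range n, ⟪e j, x⟫_ℝ • e j} := by
    rw [Submodule.isOrtho_span]
    rintro _ ⟨k, hk, rfl⟩ _ rfl
    exact inner_sub_sum_inner_smul_eq_zero he he₁ hk x
  rw [real_inner_comm]
  exact hortho.inner_eq hw (Submodule.mem_span_singleton_self _)

end PartialExpansion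

theorem exists_tendstoUniformlyOn_sum_inner_smul (F : Type*) [NormedAddCommGroup F]
    [InnerProductSpace ℝ F] [TopologicalSpace.SeparableSpace F] :
    ∃ e : ℕ → F, ∀ K : Set F, IsCompact K →
      TendstoUniformlyOn (fun n x => ∑ j ∈ Finset.range n, ⟪e j, x⟫_ℝ • e j) id atTop K := by
  obtain ⟨d, hd⟩ := TopologicalSpace.exists_dense_seq F
  set e := InnerProductSpace.gramSchmidtNormed ℝ d
  have he : Pairwise fun i j => ⟪e i, e j⟫_ℝ = 0 := fun i j hij => by
    simp [e, InnerProductSpace.gramSchmidtNormed, real_inner_smul_left, real_inner_smul_right,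
      InnerProductSpace.gramSchmidt_orthogonal ℝ d hij]
  have hspan : ∀ {k n : ℕ}, k < n → d k ∈ Submodule.span ℝ (e '' Iio n) := fun hkn => by
    rw [InnerProductSpace.span_gramSchmidtNormed, InnerProductSpace.span_gramSchmidt_Iio]
    exact Submodule.subset_span ⟨_, hkn, rfl⟩
  refine ⟨e, fun K hK => Metric.tendstoUniformlyOn_iff.2 fun ε hε => ?_⟩
  obtain ⟨s, hKs⟩ := hK.elim_finite_subcover (fun k => Metric.ball (d k) ε)
    (fun _ => Metric.isOpen_ball) fun x _ => by
      obtain ⟨k, hk⟩ := Metric.denseRange_iff.1 hd x ε hε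
      exact mem_iUnion.2 ⟨k, Metric.mem_ball'.2 (dist_comm x (d k) ▸ hk)⟩
  filter_upwards [eventually_gt_atTop (s.sup id)] with n hn x hx
  obtain ⟨k, hks, hxk⟩ := mem_iUnion₂.1 (hKs hx)
  rw [id, dist_eq_norm]
  calc _ ≤ ‖x - d k‖ := norm_sub_sum_inner_smul_le he
          (fun j => InnerProductSpace.gramSchmidtNormed_unit_length') x
          (hspan ((Finset.le_sup (f := id) hks).trans_lt hn))
    _ < ε := by rwa [← dist_eq_norm]

theorem setIntegral_norm_sq_le {α : Type*} [MeasurableSpace α] {μ : Measure α} {s : Set α}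
    (hs : μ s < ⊤) {Y : α → Type*} [∀ a, NormedAddCommGroup (Y a)] {v : ∀ a, Y a} {c : ℝ}
    (hv : ∀ a ∈ s, ‖v a‖ ≤ c) : ∫ a in s, ‖v a‖ ^ 2 ∂μ ≤ c ^ 2 * μ.real s :=
  (le_abs_self _).trans <| norm_setIntegral_le_of_norm_le_const (f := fun a => ‖v a‖ ^ 2) hs
    fun a ha => by
      rw [Real.norm_eq_abs, abs_of_nonneg (by positivity)]
      exact pow_le_pow_left₀ (norm_nonneg _) (hv a ha) 2

theorem wn_le_of_forall_norm_le {T c : ℝ} {Y Z : ℝ → Type*} [∀ t, NormedAddCommGroup (Y t)]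
    [∀ t, NormedAddCommGroup (Z t)] {u : ∀ t, Y t} {g : ∀ t, Z t}
    (hc : 0 ≤ c) (hug : ∀ t ∈ Ioc (0:ℝ) T, ‖u t‖ ≤ c ∧ ‖g t‖ ≤ c) :
    wn T u g ≤ Real.sqrt (2 * volume.real (Ioc (0:ℝ) T)) * c := by
  calc wn T u g ≤ Real.sqrt (2 * volume.real (Ioc (0:ℝ) T) * c ^ 2) := by
        refine Real.sqrt_le_sqrt ?_
        linarith [setIntegral_norm_sq_le (μ := volume) measure_Ioc_lt_top fun t ht => (hug t ht).1,
          setIntegral_norm_sq_le (μ := volume) measure_Ioc_lt_top fun t ht => (hug t ht).2]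
    _ = Real.sqrt (2 * volume.real (Ioc (0:ℝ) T)) * c := by
        rw [Real.sqrt_mul (by positivity), Real.sqrt_sq hc]

theorem tendsto_wn_nhds_zero {T : ℝ} {Y Z : ℝ → Type*} [∀ t, NormedAddCommGroup (Y t)]
    [∀ t, NormedAddCommGroup (Z t)] {ι : Type*} {l : Filter ι} {u : ι → ∀ t, Y t}
    {g : ι → ∀ t, Z t}
    (hug : ∀ ε > 0, ∀ᶠ i in l, ∀ t ∈ Ioc (0:ℝ) T, ‖u i t‖ ≤ ε ∧ ‖g i t‖ ≤ ε) :
    Tendsto (fun i => wn T (u i) (g i)) l (𝓝 0) := by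
  set M := Real.sqrt (2 * volume.real (Ioc (0:ℝ) T))
  have hM : 0 ≤ M := Real.sqrt_nonneg _
  refine tendsto_order.2 ⟨fun a ha => Eventually.of_forall fun i => ha.trans_le
    (Real.sqrt_nonneg _), fun a ha => ?_⟩
  filter_upwards [hug (a / (M + 1)) (by positivity)] with i hi
  calc wn T (u i) (g i) ≤ M * (a / (M + 1)) := wn_le_of_forall_norm_le (by positivity) hi
    _ < a := by
        rw [mul_div_assoc', div_lt_iff₀ (by positivity)]
        nlinarith

namespace EvolvingGelfand

variable {T : ℝ} {V H : ℝ → Type*}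
  [∀ t, NormedAddCommGroup (V t)] [∀ t, InnerProductSpace ℝ (V t)]
  [∀ t, NormedAddCommGroup (H t)] [∀ t, InnerProductSpace ℝ (H t)]
  (E : EvolvingGelfand T V H)

theorem norm_ι_le {t : ℝ} (ht : t ∈ Icc (0:ℝ) T) :
    ‖E.ι t‖ ≤ E.PH.C * ‖E.ι 0‖ * E.PV.C := by
  have := E.PH.C_pos
  have := E.PV.C_pos
  refine (E.ι t).opNorm_le_bound (by positivity) fun v => ?_
  have hcompat := E.ι_compat t ((E.PV.φ t).symm v)
  rw [ContinuousLinearEquiv.apply_symm_apply] at hcompat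
  calc ‖E.ι t v‖ ≤ E.PH.C * ‖E.ι 0 ((E.PV.φ t).symm v)‖ := hcompat ▸ E.PH.norm_map_le t ht _
    _ ≤ E.PH.C * (‖E.ι 0‖ * (E.PV.C * ‖v‖)) := by
        gcongr
        exact (E.ι 0).le_opNorm_of_le (E.PV.norm_symm_le t ht v)
    _ = E.PH.C * ‖E.ι 0‖ * E.PV.C * ‖v‖ := by ring

theorem norm_embed_le (t : ℝ) (h : H t) : ‖E.embed t h‖ ≤ ‖h‖ * ‖E.ι t‖ :=
  ((innerSL ℝ h).opNorm_comp_le (E.ι t)).trans_eq (by rw [innerSL_apply_norm])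

theorem exists_norm_φ_le_and_norm_embed_le : ∃ C > 0, ∀ t ∈ Icc (0:ℝ) T, ∀ v : V 0,
    ‖E.PV.φ t v‖ ≤ C * ‖v‖ ∧ ‖E.embed t (E.ι t (E.PV.φ t v))‖ ≤ C * ‖v‖ := by
  have := E.PV.C_pos
  have hK0 : 0 ≤ E.PH.C * ‖E.ι 0‖ * E.PV.C := by have := E.PH.C_pos; positivity
  set K := E.PH.C * ‖E.ι 0‖ * E.PV.C
  refine ⟨E.PV.C * (1 + K ^ 2), by positivity, fun t ht v => ⟨?_, ?_⟩⟩
  · calc ‖E.PV.φ t v‖ ≤ E.PV.C * ‖v‖ := E.PV.norm_map_le t ht v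
      _ ≤ E.PV.C * (1 + K ^ 2) * ‖v‖ := by
          gcongr
          nlinarith [sq_nonneg K]
  · have hK : ‖E.ι t‖ ≤ K := E.norm_ι_le ht
    calc ‖E.embed t (E.ι t (E.PV.φ t v))‖ ≤ ‖E.ι t (E.PV.φ t v)‖ * ‖E.ι t‖ := E.norm_embed_le t _
      _ ≤ ‖E.ι t‖ * ‖E.PV.φ t v‖ * ‖E.ι t‖ := by gcongr; exact (E.ι t).le_opNorm _
      _ ≤ K * (E.PV.C * ‖v‖) * K := by gcongr; exact E.PV.norm_map_le t ht v
      _ ≤ E.PV.C * (1 + K ^ 2) * ‖v‖ := by nlinarith [norm_nonneg v]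

end EvolvingGelfand

theorem stmt13_general (T : ℝ) (V H : ℝ → Type*)
    [∀ t, NormedAddCommGroup (V t)] [∀ t, InnerProductSpace ℝ (V t)]
    [∀ t, NormedAddCommGroup (H t)] [∀ t, InnerProductSpace ℝ (H t)]
    [∀ t, TopologicalSpace.SeparableSpace (V t)]
    (E : EvolvingGelfand T V H) :
    -- for every `η ∈ D_V(0,T)` (with pullback `η₀`) there is a sequence
    -- `η_n(t) = ∑_{j<n} ζ_j(t) φ_t w_j` in `D_V(0,T)` with `η_n → η` in `W(V,V*)`
    ∀ η₀ : ℝ → V 0, ContDiff ℝ (⊤ : ℕ∞) η₀ → tsupport η₀ ⊆ Ioo (0:ℝ) T →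
      ∃ (ζ : ℕ → ℝ → ℝ) (w : ℕ → V 0),
        (∀ j, ContDiff ℝ (⊤ : ℕ∞) (ζ j) ∧ tsupport (ζ j) ⊆ Ioo (0:ℝ) T) ∧
        Tendsto
          (fun n => wn T
            (fun t => E.PV.φ t (η₀ t)
              - E.PV.φ t (∑ j ∈ Finset.range n, ζ j t • w j))
            (fun t => E.embed t (E.ι t (E.PV.φ t
              (deriv η₀ t - ∑ j ∈ Finset.range n, deriv (ζ j) t • w j)))))
          atTop (nhds 0) := by
  intro η₀ hη hsupp
  obtain ⟨e, he⟩ := exists_tendstoUniformlyOn_sum_inner_smul (V 0)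
  obtain ⟨C, hC, hφC⟩ := E.exists_norm_φ_le_and_norm_embed_le
  have hcs : HasCompactSupport η₀ :=
    isCompact_Icc.of_isClosed_subset (isClosed_tsupport _) (hsupp.trans Ioo_subset_Icc_self)
  have hK : IsCompact (range η₀ ∪ range (deriv η₀)) :=
    (hcs.isCompact_range hη.continuous).union
      (hcs.deriv.isCompact_range (hη.continuous_deriv (by simp)))
  have hderiv (j : ℕ) : deriv (fun t => ⟪e j, η₀ t⟫_ℝ) = fun t => ⟪e j, deriv η₀ t⟫_ℝ :=
    funext fun t => ((innerSL ℝ (e j)).hasFDerivAt.comp_hasDerivAt t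
      ((hη.differentiable (by simp)) t).hasDerivAt).deriv
  refine ⟨fun j t => ⟪e j, η₀ t⟫_ℝ, e, fun j => ⟨(innerSL ℝ (e j)).contDiff.comp hη,
    (tsupport_comp_subset (map_zero (innerSL ℝ (e j))) η₀).trans hsupp⟩, ?_⟩
  simp only [hderiv, ← map_sub]
  refine tendsto_wn_nhds_zero fun ε hε => ?_
  filter_upwards [Metric.tendstoUniformlyOn_iff.1 (he _ hK) (ε / C) (div_pos hε hC)]
    with n hn t ht
  have hsmall (x : V 0) (hx : x ∈ range η₀ ∪ range (deriv η₀)) :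
      C * ‖x - ∑ j ∈ Finset.range n, ⟪e j, x⟫_ℝ • e j‖ ≤ ε := by
    rw [← le_div_iff₀' hC, ← dist_eq_norm]
    exact (hn x hx).le
  exact ⟨((hφC t (Ioc_subset_Icc_self ht) _).1).trans (hsmall _ (Or.inl (mem_range_self t))),
    ((hφC t (Ioc_subset_Icc_self ht) _).2).trans (hsmall _ (Or.inr (mem_range_self t)))⟩

theorem stmt13 (T : ℝ) (hT : 0 < T) (V H : ℝ → Type*)
    [∀ t, NormedAddCommGroup (V t)] [∀ t, InnerProductSpace ℝ (V t)]
    [∀ t, NormedAddCommGroup (H t)] [∀ t, InnerProductSpace ℝ (H t)]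
    [∀ t, CompleteSpace (V t)] [∀ t, TopologicalSpace.SeparableSpace (V t)]
    [∀ t, CompleteSpace (H t)] [∀ t, TopologicalSpace.SeparableSpace (H t)]
    (E : EvolvingGelfand T V H)
    (hESE : E.ESE) :
    -- for every `η ∈ D_V(0,T)` (with pullback `η₀`) there is a sequence
    -- `η_n(t) = ∑_{j<n} ζ_j(t) φ_t w_j` in `D_V(0,T)` with `η_n → η` in `W(V,V*)`
    ∀ η₀ : ℝ → V 0, ContDiff ℝ (⊤ : ℕ∞) η₀ → tsupport η₀ ⊆ Ioo (0:ℝ) T →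
      ∃ (ζ : ℕ → ℝ → ℝ) (w : ℕ → V 0),
        (∀ j, ContDiff ℝ (⊤ : ℕ∞) (ζ j) ∧ tsupport (ζ j) ⊆ Ioo (0:ℝ) T) ∧
        Tendsto
          (fun n => wn T
            (fun t => E.PV.φ t (η₀ t)
              - E.PV.φ t (∑ j ∈ Finset.range n, ζ j t • w j))
            (fun t => E.embed t (E.ι t (E.PV.φ t
              (deriv η₀ t - ∑ j ∈ Finset.range n, deriv (ζ j) t • w j)))))
          atTop (nhds 0) :=
  stmt13_general T V H E
end
end

section
/- Under the stated assumptions, let u ∈ L²_V and g ∈ L²_{V*}. Then ∂•u exists in L²_{V*} and L(t)∂•u(t) = g(t) for a.e. t if and only if for every v₀ ∈ V₀ the identity (d/dt)(L(t)u(t), φ_t v₀)_{H(t)} = ⟨g(t) + M(t)u(t), φ_t v₀⟩_{V(t)*,V(t)} holds in the weak (distributional) sense on (0,T). -/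
open MeasureTheory Set Filter Topology

noncomputable section

variable {T : ℝ} {X : ℝ → Type*} [∀ t, NormedAddCommGroup (X t)]
  [∀ t, InnerProductSpace ℝ (X t)]

/-- The data and assumptions (L1)–(L8) on the operator `L`. -/
structure LData {T : ℝ} {V H : ℝ → Type*}
    [∀ t, NormedAddCommGroup (V t)] [∀ t, InnerProductSpace ℝ (V t)]
    [∀ t, NormedAddCommGroup (H t)] [∀ t, InnerProductSpace ℝ (H t)]
    (E : EvolvingGelfand T V H) where
  /-- the action of `L(t)` on `V(t)*` -/
  Lstar : ∀ t, StrongDual ℝ (V t) →ₗ[ℝ] StrongDual ℝ (V t)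
  /-- the restriction `L_H(t) : H(t) → H(t)` -/
  LH : ∀ t, H t →ₗ[ℝ] H t
  /-- the restriction `L(t) : V(t) → V(t)` -/
  LV : ∀ t, V t →ₗ[ℝ] V t
  /-- the operator `L̇(t) : V(t) → V(t)*` of (L7) -/
  Ldot : ∀ t, V t →ₗ[ℝ] StrongDual ℝ (V t)
  C₁ : ℝ
  C₂ : ℝ
  C₃ : ℝ
  C₄ : ℝ
  C₅ : ℝ
  C₁_pos : 0 < C₁
  C₂_pos : 0 < C₂
  C₃_pos : 0 < C₃
  C₄_pos : 0 < C₄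
  C₅_pos : 0 < C₅
  /-- `L` maps `L²_{V*}` to `L²_{V*}` -/
  hL1_mem : ∀ g : ∀ t, StrongDual ℝ (V t), E.PV.MemL2Xstar g →
    E.PV.MemL2Xstar (fun t => Lstar t (g t))
  /-- (L1): two-sided norm bound on `L : L²_{V*} → L²_{V*}` -/
  hL1 : ∀ g : ∀ t, StrongDual ℝ (V t), E.PV.MemL2Xstar g →
    C₁ * l2n T g ≤ l2n T (fun t => Lstar t (g t)) ∧
    l2n T (fun t => Lstar t (g t)) ≤ C₂ * l2n T g
  /-- `L_H(t)` is symmetric on `H(t)` -/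
  hLH_symm : ∀ᵐ t ∂(volume.restrict (Ioc (0:ℝ) T)), ∀ h k : H t,
    (inner ℝ (LH t h) k : ℝ) = inner ℝ h (LH t k)
  /-- `L_H(t)` maps `V(t)` into `V(t)`: it restricts to `LV` -/
  hLV_compat : ∀ (t : ℝ) (v : V t), E.ι t (LV t v) = LH t (E.ι t v)
  /-- the action on `V(t)*` restricts to `L_H(t)` on `H(t) ⊂ V(t)*` -/
  hLstar_emb : ∀ (t : ℝ) (h : H t), Lstar t (E.embed t h) = E.embed t (LH t h)
  /-- (L2): `⟨L(t)g, v⟩ = ⟨g, L(t)v⟩` -/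
  hL2 : ∀ᵐ t ∂(volume.restrict (Ioc (0:ℝ) T)),
    ∀ (g : StrongDual ℝ (V t)) (v : V t), Lstar t g v = g (LV t v)
  /-- (L3): uniform boundedness of `L(t)` on `H(t)` -/
  hL3 : ∀ᵐ t ∂(volume.restrict (Ioc (0:ℝ) T)), ∀ h : H t, ‖LH t h‖ ≤ C₃ * ‖h‖
  /-- (L4): uniform coercivity of `L(t)` on `H(t)` -/
  hL4 : ∀ᵐ t ∂(volume.restrict (Ioc (0:ℝ) T)), ∀ h : H t,
    C₄ * ‖h‖ ^ 2 ≤ (inner ℝ (LH t h) h : ℝ)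
  /-- (L5): `L` maps `L²_V` to `L²_V` -/
  hL5 : ∀ v : ∀ t, V t, E.PV.MemL2X v → E.PV.MemL2X (fun t => LV t (v t))
  /-- (L6): `v ∈ W(V,V*)` iff `Lv ∈ W(V,V*)` -/
  hL6 : ∀ v : ∀ t, V t, E.PV.MemL2X v →
    ((∃ g, E.PV.MemL2Xstar g ∧ E.IWMD v g) ↔
      (∃ g, E.PV.MemL2Xstar g ∧ E.IWMD (fun t => LV t (v t)) g))
  /-- `L̇(t)` is symmetric -/
  hLdot_symm : ∀ᵐ t ∂(volume.restrict (Ioc (0:ℝ) T)), ∀ v w : V t,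
    Ldot t v w = Ldot t w v
  /-- (L7): the product rule `∂•(Lv) = L̇v + L∂•v` -/
  hL7 : ∀ (v : ∀ t, V t) (g : ∀ t, StrongDual ℝ (V t)),
    E.PV.MemL2X v → E.PV.MemL2Xstar g → E.IWMD v g →
    E.PV.MemL2Xstar (fun t => Ldot t (v t) + Lstar t (g t)) ∧
    E.IWMD (fun t => LV t (v t)) (fun t => Ldot t (v t) + Lstar t (g t))
  /-- (L8): `‖L̇(t)v‖_{V(t)*} ≤ C₅ ‖v‖_{H(t)}` -/
  hL8 : ∀ᵐ t ∂(volume.restrict (Ioc (0:ℝ) T)), ∀ v : V t,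
    ‖Ldot t v‖ ≤ C₅ * ‖E.ι t v‖

/-- The data and assumptions (A1)–(A2) on the operator `A`. -/
structure AData {T : ℝ} {V H : ℝ → Type*}
    [∀ t, NormedAddCommGroup (V t)] [∀ t, InnerProductSpace ℝ (V t)]
    [∀ t, NormedAddCommGroup (H t)] [∀ t, InnerProductSpace ℝ (H t)]
    (E : EvolvingGelfand T V H) where
  A : ∀ t, V t →ₗ[ℝ] StrongDual ℝ (V t)
  Ca : ℝ
  Cb : ℝ
  Cc : ℝ
  Ca_pos : 0 < Ca
  Cb_pos : 0 < Cb
  Cc_pos : 0 < Cc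
  /-- `t ↦ ⟨A(t)v(t), w(t)⟩` is measurable for `v, w ∈ L²_V` -/
  meas : ∀ v w : ∀ t, V t, E.PV.MemL2X v → E.PV.MemL2X w →
    AEMeasurable (fun t => A t (v t) (w t)) (volume.restrict (Ioc (0:ℝ) T))
  /-- (A1): Gårding coercivity -/
  coercive : ∀ᵐ t ∂(volume.restrict (Ioc (0:ℝ) T)), ∀ v : V t,
    Ca * ‖v‖ ^ 2 - Cb * ‖E.ι t v‖ ^ 2 ≤ A t v v
  /-- (A2): uniform boundedness -/
  bounded : ∀ᵐ t ∂(volume.restrict (Ioc (0:ℝ) T)), ∀ v w : V t,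
    |A t v w| ≤ Cc * ‖v‖ * ‖w‖

/-- `u` (with weak material derivative `g` and continuous-in-time pullback
representative `c`, realising the initial value `u(0) = u₀`) solves the problem
`L∂•u + Au + Λu = f`, `u(0) = u₀` of the paper. -/
def IsSolution {T : ℝ} {V H : ℝ → Type*}
    [∀ t, NormedAddCommGroup (V t)] [∀ t, InnerProductSpace ℝ (V t)]
    [∀ t, NormedAddCommGroup (H t)] [∀ t, InnerProductSpace ℝ (H t)]
    (E : EvolvingGelfand T V H) (LD : LData E) (AD : AData E)
    (f : ∀ t, StrongDual ℝ (V t)) (u₀ : H 0)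
    (u : ∀ t, V t) (g : ∀ t, StrongDual ℝ (V t)) (c : ℝ → H 0) : Prop :=
  E.PV.MemL2X u ∧ E.PV.MemL2Xstar g ∧ E.IWMD u g ∧
  (∀ᵐ t ∂(volume.restrict (Ioc (0:ℝ) T)), ∀ v : V t,
    LD.Lstar t (g t) v + AD.A t (u t) v + E.lam t (E.ι t (u t)) (E.ι t v) = f t v) ∧
  ContinuousOn c (Icc (0:ℝ) T) ∧
  (∀ᵐ t ∂(volume.restrict (Ioc (0:ℝ) T)), c t = E.ι 0 ((E.PV.φ t).symm (u t))) ∧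
  c 0 = u₀

/-! Testing the weak material derivative identity of a function `w` against `η = ζ • v₀`
(pulled back to `V₀`) gives exactly the scalar identity of the statement, with `w = Lu`. The
scalar identities for all `v₀` imply the identity for every test function: project `η` onto
finite-dimensional subspaces, where it is a finite sum of such products, and pass to the limit
by dominated convergence. So the right-hand side says that `∂•(Lu) = g + L̇u`.
Forward, (L7) gives `∂•(Lu) = L̇u + L∂•u = L̇u + g`. Backward, (L6) gives `u ∈ W(V,V*)`, then
(L7) gives `∂•(Lu) = L̇u + L∂•u`, and uniqueness of weak material derivatives (du Bois-Reymond
for `V₀*`-valued functions) yields `L∂•u = g`. -/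

theorem MeasureTheory.AEStronglyMeasurable.comp_caratheodory {α E F : Type*}
    {mα : MeasurableSpace α} {μ : Measure α} [NormedAddCommGroup E] [NormedAddCommGroup F]
    {g : α → E → F} {f : α → E}
    (hf : AEStronglyMeasurable f μ) (hg : ∀ x, AEStronglyMeasurable (fun t => g t x) μ)
    (hgc : ∀ᵐ t ∂μ, Continuous (g t)) :
    AEStronglyMeasurable (fun t => g t (f t)) μ := by
  have hmk := hf.stronglyMeasurable_mk
  have happrox : ∀ n, AEStronglyMeasurable (fun t => g t (hmk.approx n t)) μ := by
    intro n
    set s := hmk.approx n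
    have hs : (fun t => g t (s t))
        = fun t => ∑ c ∈ s.range, (s ⁻¹' {c}).indicator (fun t => g t c) t := by
      funext t
      rw [Finset.sum_eq_single_of_mem (s t) (s.mem_range_self t),
        Set.indicator_of_mem (by simp)]
      intro c _ hne
      exact Set.indicator_of_notMem (by simp [hne.symm]) _
    rw [hs]
    exact Finset.aestronglyMeasurable_fun_sum _ fun c _ =>
      (hg c).indicator (s.measurableSet_fiber c)
  have hlim : AEStronglyMeasurable (fun t => g t (hf.mk f t)) μ := by
    refine aestronglyMeasurable_of_tendsto_ae atTop happrox ?_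
    filter_upwards [hgc] with t hc
    exact (hc.tendsto _).comp (hmk.tendsto_approx t)
  refine hlim.congr ?_
  filter_upwards [hf.ae_eq_mk] with t h
  rw [← h]

theorem HasCompactSupport.of_tsupport_subset_isBounded {X α : Type*} [PseudoMetricSpace X]
    [ProperSpace X] [Zero α] {f : X → α} {U : Set X} (hU : Bornology.IsBounded U)
    (hf : tsupport f ⊆ U) : HasCompactSupport f :=
  Metric.isCompact_of_isClosed_isBounded (isClosed_tsupport f) (hU.subset hf)

section DominatedLinearFamily

variable {V : Type*} [NormedAddCommGroup V] [NormedSpace ℝ V] {μ : Measure ℝ}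

structure IsDominatedLinearFamily (μ : Measure ℝ) (F : ℝ → V → ℝ) : Prop where
  linear : ∀ᵐ t ∂μ, IsLinearMap ℝ (F t)
  dominated : ∃ K : ℝ → ℝ, Integrable K μ ∧ ∀ᵐ t ∂μ, ∀ v, ‖F t v‖ ≤ K t * ‖v‖
  aestronglyMeasurable_apply : ∀ v, AEStronglyMeasurable (fun t => F t v) μ

namespace IsDominatedLinearFamily

variable {F G : ℝ → V → ℝ}

theorem add (hF : IsDominatedLinearFamily μ F) (hG : IsDominatedLinearFamily μ G) :
    IsDominatedLinearFamily μ (fun t v => F t v + G t v) where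
  linear := by
    filter_upwards [hF.linear, hG.linear] with t hFt hGt
    exact (hFt.mk' _ + hGt.mk' _).isLinear
  dominated := by
    obtain ⟨K, hK, hFK⟩ := hF.dominated
    obtain ⟨L, hL, hGL⟩ := hG.dominated
    refine ⟨K + L, hK.add hL, ?_⟩
    filter_upwards [hFK, hGL] with t hFt hGt v
    calc ‖F t v + G t v‖ ≤ ‖F t v‖ + ‖G t v‖ := norm_add_le _ _
      _ ≤ K t * ‖v‖ + L t * ‖v‖ := add_le_add (hFt v) (hGt v)
      _ = (K + L) t * ‖v‖ := by simp only [Pi.add_apply]; ring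
  aestronglyMeasurable_apply v :=
    (hF.aestronglyMeasurable_apply v).add (hG.aestronglyMeasurable_apply v)

theorem ae_continuous (hF : IsDominatedLinearFamily μ F) : ∀ᵐ t ∂μ, Continuous (F t) := by
  obtain ⟨K, -, hFK⟩ := hF.dominated
  filter_upwards [hF.linear, hFK] with t hlin hbound
  exact AddMonoidHomClass.continuous_of_bound (hlin.mk' _) (K t) hbound

theorem aestronglyMeasurable_comp (hF : IsDominatedLinearFamily μ F) {y : ℝ → V}
    (hy : AEStronglyMeasurable y μ) : AEStronglyMeasurable (fun t => F t (y t)) μ :=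
  hy.comp_caratheodory hF.aestronglyMeasurable_apply hF.ae_continuous

theorem integrable_comp (hF : IsDominatedLinearFamily μ F) {y : ℝ → V}
    (hy : AEStronglyMeasurable y μ) {M : ℝ} (hM : ∀ t, ‖y t‖ ≤ M) :
    Integrable (fun t => F t (y t)) μ := by
  obtain ⟨K, hK, hFK⟩ := hF.dominated
  refine (hK.norm.mul_const M).mono' (hF.aestronglyMeasurable_comp hy) ?_
  filter_upwards [hFK] with t ht
  exact (ht _).trans (mul_le_mul (Real.le_norm_self _) (hM t) (norm_nonneg _) (norm_nonneg _))

theorem integral_comp_smul (hF : IsDominatedLinearFamily μ F) (c : ℝ → ℝ) (v : V) :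
    ∫ t, F t (c t • v) ∂μ = ∫ t, c t * F t v ∂μ := by
  refine integral_congr_ae ?_
  filter_upwards [hF.linear] with t hlin
  exact hlin.map_smul (c t) v

theorem integral_comp_sum (hF : IsDominatedLinearFamily μ F) {ι : Type*} (s : Finset ι)
    {y : ι → ℝ → V} (hy : ∀ j, AEStronglyMeasurable (y j) μ) {M : ι → ℝ}
    (hM : ∀ j t, ‖y j t‖ ≤ M j) :
    ∫ t, F t (∑ j ∈ s, y j t) ∂μ = ∑ j ∈ s, ∫ t, F t (y j t) ∂μ := by
  rw [← integral_finsetSum s fun j _ => hF.integrable_comp (hy j) (hM j)]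
  refine integral_congr_ae ?_
  filter_upwards [hF.linear] with t hlin
  exact map_sum (hlin.mk' _) _ s

theorem tendsto_integral_comp (hF : IsDominatedLinearFamily μ F) {y : ℕ → ℝ → V}
    {y₀ : ℝ → V} (hy : ∀ n, AEStronglyMeasurable (y n) μ) {M : ℝ} (hM : ∀ n t, ‖y n t‖ ≤ M)
    (hlim : ∀ t, Tendsto (fun n => y n t) atTop (𝓝 (y₀ t))) :
    Tendsto (fun n => ∫ t, F t (y n t) ∂μ) atTop (𝓝 (∫ t, F t (y₀ t) ∂μ)) := by
  obtain ⟨K, hK, hFK⟩ := hF.dominated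
  refine tendsto_integral_of_dominated_convergence (fun t => ‖K t‖ * M)
    (fun n => hF.aestronglyMeasurable_comp (hy n)) (hK.norm.mul_const M) (fun n => ?_) ?_
  · filter_upwards [hFK] with t ht
    exact (ht _).trans (mul_le_mul (Real.le_norm_self _) (hM n t) (norm_nonneg _) (norm_nonneg _))
  · filter_upwards [hF.ae_continuous] with t hc
    exact (hc.tendsto _).comp (hlim t)

end IsDominatedLinearFamily

end DominatedLinearFamily

section FiniteRankApproximation

variable {V : Type*} [NormedAddCommGroup V] [InnerProductSpace ℝ V]

theorem exists_finiteRank_approx [CompleteSpace V] [TopologicalSpace.SeparableSpace V] :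
    ∃ P : ℕ → V →L[ℝ] V, (∀ n x, ‖P n x‖ ≤ ‖x‖) ∧
      (∀ x, Tendsto (fun n => P n x) atTop (𝓝 x)) ∧
      ∀ n, ∃ (N : ℕ) (e : Fin N → V), ∀ x, P n x = ∑ j, inner ℝ (e j) x • e j := by
  obtain ⟨d, hd⟩ := TopologicalSpace.exists_dense_seq V
  let U : ℕ → Submodule ℝ V := fun n => Submodule.span ℝ (d '' Iio n)
  have : ∀ n, FiniteDimensional ℝ (U n) := fun n =>
    FiniteDimensional.span_of_finite ℝ ((finite_Iio n).image d)
  refine ⟨fun n => (U n).starProjection, fun n x => (U n).norm_starProjection_apply_le x,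
    fun x => ?_, fun n => ?_⟩
  · have hmono : Monotone U := fun m n hmn =>
      Submodule.span_mono (image_mono (Iio_subset_Iio hmn))
    have hrange : range d ⊆ ((⨆ n, U n : Submodule ℝ V) : Set V) := by
      rintro _ ⟨k, rfl⟩
      exact Submodule.mem_iSup_of_mem (k + 1) (Submodule.subset_span ⟨k, k.lt_succ_self, rfl⟩)
    exact Submodule.starProjection_tendsto_self U hmono x
      (Submodule.dense_iff_topologicalClosure_eq_top.1 (hd.mono hrange)).ge
  · let b := stdOrthonormalBasis ℝ (U n)
    refine ⟨_, fun j => b j, fun x => ?_⟩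
    simp [Submodule.starProjection_apply, b.orthogonalProjectionOnto_apply_eq_sum]

theorem IsDominatedLinearFamily.integral_comp_sum_inner_smul {μ : Measure ℝ} {F : ℝ → V → ℝ}
    (hF : IsDominatedLinearFamily μ F)
    {η : ℝ → V} (hη : Continuous η) {M : ℝ} (hM : ∀ t, ‖η t‖ ≤ M) {N : ℕ} (e : Fin N → V) :
    ∫ t, F t (∑ j, inner ℝ (e j) (η t) • e j) ∂μ
      = ∑ j, ∫ t, inner ℝ (e j) (η t) * F t (e j) ∂μ := by
  have hbound : ∀ j t, ‖inner ℝ (e j) (η t) • e j‖ ≤ ‖e j‖ * M * ‖e j‖ := fun j t => by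
    rw [norm_smul]
    gcongr
    exact (norm_inner_le_norm _ _).trans (by gcongr; exact hM t)
  rw [hF.integral_comp_sum (y := fun j t => inner ℝ (e j) (η t) • e j) _
    (fun j => ((innerSL ℝ (e j)).continuous.comp hη).aestronglyMeasurable.smul_const _) hbound]
  simp only [hF.integral_comp_smul]

theorem IsDominatedLinearFamily.integral_deriv_eq_neg_of_forall_smul [CompleteSpace V]
    [TopologicalSpace.SeparableSpace V] {μ : Measure ℝ} {F Fd : ℝ → V → ℝ}
    (hF : IsDominatedLinearFamily μ F) (hFd : IsDominatedLinearFamily μ Fd) {U : Set ℝ}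
    (hU : Bornology.IsBounded U)
    (h : ∀ v : V, ∀ ζ : ℝ → ℝ, ContDiff ℝ (⊤ : ℕ∞) ζ → tsupport ζ ⊆ U →
      ∫ t, deriv ζ t * Fd t v ∂μ = -∫ t, ζ t * F t v ∂μ)
    {η : ℝ → V} (hη : ContDiff ℝ (⊤ : ℕ∞) η) (hηU : tsupport η ⊆ U) :
    ∫ t, Fd t (deriv η t) ∂μ = -∫ t, F t (η t) ∂μ := by
  obtain ⟨P, hPnorm, hPlim, hPsum⟩ := exists_finiteRank_approx (V := V)
  have hc := HasCompactSupport.of_tsupport_subset_isBounded hU hηU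
  have hη' : Continuous (deriv η) := hη.continuous_deriv (by simp)
  obtain ⟨M, hM⟩ := hη.continuous.bounded_above_of_compact_support hc
  obtain ⟨M', hM'⟩ := hη'.bounded_above_of_compact_support hc.deriv
  have hderiv : ∀ e t, deriv (fun s => inner ℝ e (η s)) t = inner ℝ e (deriv η t) :=
    fun e t => ((innerSL ℝ e).hasFDerivAt.comp_hasDerivAt t
      ((hη.differentiable (by simp)) t).hasDerivAt).deriv
  have happrox : ∀ n, ∫ t, Fd t (P n (deriv η t)) ∂μ = -∫ t, F t (P n (η t)) ∂μ := by
    intro n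
    obtain ⟨N, e, he⟩ := hPsum n
    simp only [he]
    rw [hFd.integral_comp_sum_inner_smul hη' hM', hF.integral_comp_sum_inner_smul hη.continuous hM,
      ← Finset.sum_neg_distrib]
    refine Finset.sum_congr rfl fun j _ => ?_
    simpa only [hderiv] using h (e j) _ (contDiff_const.inner ℝ hη)
      ((tsupport_comp_subset (inner_zero_right (e j)) η).trans hηU)
  have hmeas : ∀ {y : ℝ → V}, Continuous y → ∀ n,
      AEStronglyMeasurable (fun t => P n (y t)) μ :=
    fun hy n => ((P n).continuous.comp hy).aestronglyMeasurable
  refine tendsto_nhds_unique ?_ ((hF.tendsto_integral_comp (hmeas hη.continuous)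
    (fun n t => (hPnorm n _).trans (hM t)) (fun t => hPlim _)).neg)
  simp only [← happrox]
  exact hFd.tendsto_integral_comp (hmeas hη') (fun n t => (hPnorm n _).trans (hM' t))
    (fun t => hPlim _)

theorem IsDominatedLinearFamily.integral_deriv_eq_neg_iff [CompleteSpace V]
    [TopologicalSpace.SeparableSpace V] {μ : Measure ℝ}
    {F Fd : ℝ → V → ℝ} (hF : IsDominatedLinearFamily μ F) (hFd : IsDominatedLinearFamily μ Fd)
    {U : Set ℝ} (hU : Bornology.IsBounded U) :
    (∀ η : ℝ → V, ContDiff ℝ (⊤ : ℕ∞) η → tsupport η ⊆ U →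
      ∫ t, Fd t (deriv η t) ∂μ = -∫ t, F t (η t) ∂μ) ↔
    ∀ v : V, ∀ ζ : ℝ → ℝ, ContDiff ℝ (⊤ : ℕ∞) ζ → tsupport ζ ⊆ U →
      ∫ t, deriv ζ t * Fd t v ∂μ = -∫ t, ζ t * F t v ∂μ := by
  refine ⟨fun h v ζ hζ hζU => ?_, fun h η => hF.integral_deriv_eq_neg_of_forall_smul hFd hU h⟩
  have hderiv : deriv (fun t => ζ t • v) = fun t => deriv ζ t • v :=
    funext fun t => deriv_smul_const ((hζ.differentiable (by simp)) t) v
  have := h (fun t => ζ t • v) (hζ.smul contDiff_const)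
    ((tsupport_smul_subset_left ζ _).trans hζU)
  rwa [hderiv, hFd.integral_comp_smul, hF.integral_comp_smul] at this

end FiniteRankApproximation

theorem ae_restrict_Ioc_mem_Ioo (a b : ℝ) : ∀ᵐ t ∂volume.restrict (Ioc a b), t ∈ Ioo a b := by
  rw [← Measure.restrict_congr_set Ioo_ae_eq_Ioc]
  exact ae_restrict_mem measurableSet_Ioo

theorem CompatiblePair.norm_pullDual_le_s16 (P : CompatiblePair T X) {t : ℝ} (ht : t ∈ Icc 0 T)
    (f : StrongDual ℝ (X t)) : ‖P.pullDual t f‖ ≤ P.C * ‖f‖ := by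
  refine ContinuousLinearMap.opNorm_le_bound _ (mul_nonneg P.C_pos.le (norm_nonneg _)) fun v => ?_
  calc ‖f (P.φ t v)‖ ≤ ‖f‖ * ‖P.φ t v‖ := f.le_opNorm _
    _ ≤ ‖f‖ * (P.C * ‖v‖) := mul_le_mul_of_nonneg_left (P.norm_map_le t ht v) (norm_nonneg _)
    _ = P.C * ‖f‖ * ‖v‖ := by ring

theorem CompatiblePair.pullDual_injective (P : CompatiblePair T X) (t : ℝ) :
    Function.Injective (P.pullDual t) := fun f g h => ContinuousLinearMap.ext fun v => by
  simpa [CompatiblePair.pullDual] using congrArg (fun f => f ((P.φ t).symm v)) h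

namespace EvolvingGelfand

variable {T : ℝ} {V H : ℝ → Type*}
  [∀ t, NormedAddCommGroup (V t)] [∀ t, InnerProductSpace ℝ (V t)]
  [∀ t, NormedAddCommGroup (H t)] [∀ t, InnerProductSpace ℝ (H t)]
  (E : EvolvingGelfand T V H)

def innerH (s : ℝ) (x y : H 0) : ℝ :=
  inner ℝ (E.PH.φ s x) (E.PH.φ s y)

variable {E}

theorem hasDerivWithinAt_innerH (x y : H 0) {t : ℝ} (ht : t ∈ Icc 0 T) :
    HasDerivWithinAt (E.innerH · x y) (E.lamHat t x y) (Icc 0 T) t := by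
  have hpolar : (E.innerH · x y)
      = fun s => (‖E.PH.φ s (x + y)‖ ^ 2 - ‖E.PH.φ s (x - y)‖ ^ 2) / 4 := by
    funext s
    rw [innerH, map_add, map_sub, norm_add_sq_real, norm_sub_sq_real]
    ring
  rw [hpolar]
  exact ((E.θ_hasDeriv _ t ht).sub (E.θ_hasDeriv _ t ht)).div_const 4

theorem continuousOn_innerH (x y : H 0) : ContinuousOn (E.innerH · x y) (Icc 0 T) :=
  fun _ ht => (hasDerivWithinAt_innerH x y ht).continuousWithinAt

theorem isLinearMap_lamHat (hT : 0 < T) {t : ℝ} (ht : t ∈ Icc 0 T) (x : H 0) :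
    IsLinearMap ℝ (E.lamHat t x) where
  map_add a b := by
    have h := hasDerivWithinAt_innerH (E := E) x (a + b) ht
    simp only [innerH, map_add, inner_add_right] at h
    exact (uniqueDiffOn_Icc hT t ht).eq_deriv _ h
      ((hasDerivWithinAt_innerH x a ht).add (hasDerivWithinAt_innerH x b ht))
  map_smul c a := by
    have h := hasDerivWithinAt_innerH (E := E) x (c • a) ht
    simp only [innerH, map_smul, inner_smul_right] at h
    exact (uniqueDiffOn_Icc hT t ht).eq_deriv _ h ((hasDerivWithinAt_innerH x a ht).const_mul c)

theorem norm_lamHat_le {t : ℝ} (ht : t ∈ Icc 0 T) (x y : H 0) :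
    ‖E.lamHat t x y‖ ≤ |E.Cθ| / 4 * ‖x‖ * ‖y‖ := by
  rw [lamHat, norm_div, Real.norm_eq_abs, Real.norm_of_nonneg zero_le_four]
  have := (E.θ_bound t ht x y).trans
    (mul_le_mul_of_nonneg_right (mul_le_mul_of_nonneg_right (le_abs_self E.Cθ)
      (norm_nonneg x)) (norm_nonneg y))
  linarith

theorem continuous_lamHat_left {t : ℝ} (ht : t ∈ Icc 0 T) (y : H 0) :
    Continuous (E.lamHat t · y) :=
  (((E.θ_cont t ht).comp (continuous_add_const y)).sub
    ((E.θ_cont t ht).comp (continuous_sub_right y))).div_const 4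

theorem aestronglyMeasurable_lamHat (x y : H 0) :
    AEStronglyMeasurable (E.lamHat · x y) (volume.restrict (Ioc 0 T)) := by
  refine (measurable_deriv (E.innerH · x y)).aestronglyMeasurable.congr ?_
  filter_upwards [ae_restrict_Ioc_mem_Ioo 0 T] with t ht
  exact ((hasDerivWithinAt_innerH x y (Ioo_subset_Icc_self ht)).hasDerivAt
    (Icc_mem_nhds ht.1 ht.2)).deriv

theorem integral_deriv_mul_innerH (hT : 0 < T) {ζ : ℝ → ℝ} (hζ : ContDiff ℝ (⊤ : ℕ∞) ζ)
    (hζ0 : ζ 0 = 0) (hζT : ζ T = 0) (x y : H 0) :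
    ∫ t in Ioc 0 T, deriv ζ t * E.innerH t x y = -∫ t in Ioc 0 T, ζ t * E.lamHat t x y := by
  have hζ' : Continuous (deriv ζ) := hζ.continuous_deriv (by simp)
  have hb : IntervalIntegrable (E.lamHat · x y) volume 0 T := by
    rw [intervalIntegrable_iff_integrableOn_Ioc_of_le hT.le]
    refine (integrable_const (|E.Cθ| / 4 * ‖x‖ * ‖y‖)).mono' (aestronglyMeasurable_lamHat x y) ?_
    filter_upwards [ae_restrict_Ioc_mem_Ioo 0 T] with t ht
    exact norm_lamHat_le (Ioo_subset_Icc_self ht) x y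
  have hparts := intervalIntegral.integral_deriv_mul_eq_sub_of_hasDerivWithinAt
    (u := ζ) (v := (E.innerH · x y))
    (fun t _ => ((hζ.differentiable (by simp)) t).hasDerivAt.hasDerivWithinAt)
    (fun t ht => by
      rw [uIcc_of_le hT.le] at ht ⊢
      exact hasDerivWithinAt_innerH x y ht)
    (hζ'.intervalIntegrable 0 T) hb
  rw [hζ0, hζT, zero_mul, zero_mul, sub_zero,
    intervalIntegral.integral_add ((hζ'.intervalIntegrable 0 T).mul_continuousOn ?_)
      (hb.continuousOn_mul hζ.continuous.continuousOn)] at hparts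
  · rw [intervalIntegral.integral_of_le hT.le, intervalIntegral.integral_of_le hT.le] at hparts
    linarith
  · rw [uIcc_of_le hT.le]
    exact continuousOn_innerH x y

variable (E)

def innerForm (w : ∀ t, V t) (t : ℝ) (v : V 0) : ℝ :=
  inner ℝ (E.ι t (w t)) (E.ι t (E.PV.φ t v))

def evalForm (w : ∀ t, V t) (G : ∀ t, StrongDual ℝ (V t)) (t : ℝ) (v : V 0) : ℝ :=
  G t (E.PV.φ t v) + E.lam t (E.ι t (w t)) (E.ι t (E.PV.φ t v))

variable {E}

theorem norm_ι_φ_le {t : ℝ} (ht : t ∈ Icc 0 T) (a : V 0) :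
    ‖E.ι t (E.PV.φ t a)‖ ≤ E.PH.C * ‖E.ι 0‖ * ‖a‖ := by
  rw [E.ι_compat, mul_assoc]
  exact (E.PH.norm_map_le t ht _).trans
    (mul_le_mul_of_nonneg_left ((E.ι 0).le_opNorm a) E.PH.C_pos.le)

theorem innerForm_eq (w : ∀ t, V t) (t : ℝ) (v : V 0) :
    E.innerForm w t v = E.innerH t (E.ι 0 ((E.PV.φ t).symm (w t))) (E.ι 0 v) := by
  conv_lhs => rw [innerForm, ← (E.PV.φ t).apply_symm_apply (w t)]
  rw [E.ι_compat, E.ι_compat]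
  rfl

theorem lam_ι_φ (t : ℝ) (a b : V 0) :
    E.lam t (E.ι t (E.PV.φ t a)) (E.ι t (E.PV.φ t b)) = E.lamHat t (E.ι 0 a) (E.ι 0 b) := by
  rw [lam, E.ι_compat, E.ι_compat, (E.PH.φ t).symm_apply_apply, (E.PH.φ t).symm_apply_apply]

theorem lam_eq_lamHat (w : ∀ t, V t) (t : ℝ) (v : V 0) :
    E.lam t (E.ι t (w t)) (E.ι t (E.PV.φ t v))
      = E.lamHat t (E.ι 0 ((E.PV.φ t).symm (w t))) (E.ι 0 v) := by
  rw [← lam_ι_φ, (E.PV.φ t).apply_symm_apply]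

theorem isDominatedLinearFamily_innerForm {w : ∀ t, V t} (hw : E.PV.MemL2X w) :
    IsDominatedLinearFamily (volume.restrict (Ioc 0 T)) (E.innerForm w) where
  linear := Eventually.of_forall fun t =>
    ((innerSL ℝ (E.ι t (w t))).comp ((E.ι t).comp (E.PV.φ t : V 0 →L[ℝ] V t))).isLinear
  dominated := by
    refine ⟨fun t => (E.PH.C * ‖E.ι 0‖) ^ 2 * ‖(E.PV.φ t).symm (w t)‖,
      (hw.norm.integrable one_le_two).const_mul _, ?_⟩
    filter_upwards [ae_restrict_Ioc_mem_Ioo 0 T] with t ht v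
    have ht := Ioo_subset_Icc_self ht
    set w₀ := (E.PV.φ t).symm (w t)
    calc ‖E.innerForm w t v‖ = ‖inner ℝ (E.ι t (E.PV.φ t w₀)) (E.ι t (E.PV.φ t v))‖ := by
          rw [innerForm, (E.PV.φ t).apply_symm_apply]
      _ ≤ ‖E.ι t (E.PV.φ t w₀)‖ * ‖E.ι t (E.PV.φ t v)‖ := norm_inner_le_norm _ _
      _ ≤ (E.PH.C * ‖E.ι 0‖ * ‖w₀‖) * (E.PH.C * ‖E.ι 0‖ * ‖v‖) :=
          mul_le_mul (norm_ι_φ_le ht _) (norm_ι_φ_le ht _) (norm_nonneg _)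
            (by have := E.PH.C_pos; positivity)
      _ = _ := by ring
  aestronglyMeasurable_apply v := by
    simp only [innerForm_eq]
    refine AEStronglyMeasurable.comp_caratheodory (g := fun t x => E.innerH t x (E.ι 0 v))
      ((E.ι 0).continuous.comp_aestronglyMeasurable hw.aestronglyMeasurable)
      (fun x => ((continuousOn_innerH x _).mono Ioc_subset_Icc_self).aestronglyMeasurable
        measurableSet_Ioc) (Eventually.of_forall fun t => ?_)
    exact ((E.PH.φ t).continuous.inner continuous_const)

theorem isDominatedLinearFamily_dual {G : ∀ t, StrongDual ℝ (V t)} (hG : E.PV.MemL2Xstar G) :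
    IsDominatedLinearFamily (volume.restrict (Ioc 0 T)) (fun t v => G t (E.PV.φ t v)) where
  linear := Eventually.of_forall fun t => (E.PV.pullDual t (G t)).isLinear
  dominated := ⟨fun t => ‖E.PV.pullDual t (G t)‖, hG.norm.integrable one_le_two,
    Eventually.of_forall fun t v => (E.PV.pullDual t (G t)).le_opNorm v⟩
  aestronglyMeasurable_apply v :=
    (ContinuousLinearMap.apply ℝ ℝ v).continuous.comp_aestronglyMeasurable hG.aestronglyMeasurable

theorem isDominatedLinearFamily_lam (hT : 0 < T) {w : ∀ t, V t} (hw : E.PV.MemL2X w) :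
    IsDominatedLinearFamily (volume.restrict (Ioc 0 T))
      (fun t v => E.lam t (E.ι t (w t)) (E.ι t (E.PV.φ t v))) where
  linear := by
    filter_upwards [ae_restrict_Ioc_mem_Ioo 0 T] with t ht
    simp only [lam_eq_lamHat]
    exact ((isLinearMap_lamHat hT (Ioo_subset_Icc_self ht) _).mk' _ ∘ₗ
      (E.ι 0).toLinearMap).isLinear
  dominated := by
    refine ⟨fun t => |E.Cθ| / 4 * ‖E.ι 0‖ ^ 2 * ‖(E.PV.φ t).symm (w t)‖,
      (hw.norm.integrable one_le_two).const_mul _, ?_⟩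
    filter_upwards [ae_restrict_Ioc_mem_Ioo 0 T] with t ht v
    rw [lam_eq_lamHat]
    refine (norm_lamHat_le (Ioo_subset_Icc_self ht) _ _).trans ?_
    calc _ ≤ |E.Cθ| / 4 * (‖E.ι 0‖ * ‖(E.PV.φ t).symm (w t)‖) * (‖E.ι 0‖ * ‖v‖) := by
          gcongr <;> exact (E.ι 0).le_opNorm _
      _ = _ := by ring
  aestronglyMeasurable_apply v := by
    simp only [lam_eq_lamHat]
    refine AEStronglyMeasurable.comp_caratheodory (g := fun t x => E.lamHat t x (E.ι 0 v))
      ((E.ι 0).continuous.comp_aestronglyMeasurable hw.aestronglyMeasurable)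
      (fun x => aestronglyMeasurable_lamHat x _) ?_
    filter_upwards [ae_restrict_Ioc_mem_Ioo 0 T] with t ht
    exact continuous_lamHat_left (Ioo_subset_Icc_self ht) _

theorem isDominatedLinearFamily_evalForm (hT : 0 < T) {w : ∀ t, V t} (hw : E.PV.MemL2X w)
    {G : ∀ t, StrongDual ℝ (V t)} (hG : E.PV.MemL2Xstar G) :
    IsDominatedLinearFamily (volume.restrict (Ioc 0 T)) (E.evalForm w G) :=
  (isDominatedLinearFamily_dual hG).add (isDominatedLinearFamily_lam hT hw)

theorem iwmd_iff_integral_deriv_eq_neg (hT : 0 < T) {w : ∀ t, V t} (hw : E.PV.MemL2X w)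
    {G : ∀ t, StrongDual ℝ (V t)} (hG : E.PV.MemL2Xstar G) :
    E.IWMD w G ↔ ∀ η₀ : ℝ → V 0, ContDiff ℝ (⊤ : ℕ∞) η₀ → tsupport η₀ ⊆ Ioo 0 T →
      ∫ t in Ioc 0 T, E.innerForm w t (deriv η₀ t)
        = -∫ t in Ioc 0 T, E.evalForm w G t (η₀ t) := by
  refine forall₃_congr fun η₀ hη hηT => ?_
  obtain ⟨M, hM⟩ := hη.continuous.bounded_above_of_compact_support
    (HasCompactSupport.of_tsupport_subset_isBounded (Metric.isBounded_Ioo 0 T) hηT)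
  have hη₀ : AEStronglyMeasurable η₀ (volume.restrict (Ioc 0 T)) :=
    hη.continuous.aestronglyMeasurable
  unfold evalForm innerForm
  rw [integral_add ((isDominatedLinearFamily_dual hG).integrable_comp hη₀ hM)
    ((isDominatedLinearFamily_lam hT hw).integrable_comp hη₀ hM)]
  constructor <;> intro h <;> linarith

theorem iwmd_iff_forall_smul [CompleteSpace (V 0)] [TopologicalSpace.SeparableSpace (V 0)]
    (hT : 0 < T) {w : ∀ t, V t} (hw : E.PV.MemL2X w)
    {G : ∀ t, StrongDual ℝ (V t)} (hG : E.PV.MemL2Xstar G) :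
    E.IWMD w G ↔ ∀ v₀ : V 0, ∀ ζ : ℝ → ℝ, ContDiff ℝ (⊤ : ℕ∞) ζ → tsupport ζ ⊆ Ioo 0 T →
      ∫ t in Ioc 0 T, deriv ζ t * E.innerForm w t v₀
        = -∫ t in Ioc 0 T, ζ t * E.evalForm w G t v₀ :=
  (iwmd_iff_integral_deriv_eq_neg hT hw hG).trans
    ((isDominatedLinearFamily_evalForm hT hw hG).integral_deriv_eq_neg_iff
      (isDominatedLinearFamily_innerForm hw) (Metric.isBounded_Ioo 0 T))

theorem memL2X_φ (v₀ : V 0) : E.PV.MemL2X (fun t => E.PV.φ t v₀) := by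
  simp only [CompatiblePair.MemL2X, ContinuousLinearEquiv.symm_apply_apply]
  exact memLp_const v₀

theorem memL2Xstar_zero : E.PV.MemL2Xstar (0 : ∀ t, StrongDual ℝ (V t)) := by
  simp only [CompatiblePair.MemL2Xstar, CompatiblePair.pullDual, Pi.zero_apply,
    ContinuousLinearMap.zero_comp]
  exact memLp_const 0

theorem memL2Xstar_add {f g : ∀ t, StrongDual ℝ (V t)} (hf : E.PV.MemL2Xstar f)
    (hg : E.PV.MemL2Xstar g) : E.PV.MemL2Xstar (fun t => f t + g t) := by
  have : (fun t => E.PV.pullDual t (f t + g t))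
      = fun t => E.PV.pullDual t (f t) + E.PV.pullDual t (g t) :=
    funext fun t => ContinuousLinearMap.add_comp _ _ _
  rw [CompatiblePair.MemL2Xstar, this]
  exact MemLp.add (f := fun t => E.PV.pullDual t (f t)) (g := fun t => E.PV.pullDual t (g t))
    hf hg

theorem iwmd_φ_zero [CompleteSpace (V 0)] [TopologicalSpace.SeparableSpace (V 0)] (hT : 0 < T)
    (v₀ : V 0) : E.IWMD (fun t => E.PV.φ t v₀) 0 := by
  rw [iwmd_iff_forall_smul hT (memL2X_φ v₀) (memL2Xstar_zero (E := E))]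
  intro v ζ hζ hζT
  have hvanish : ∀ s ∉ Ioo 0 T, ζ s = 0 := fun s hs =>
    image_eq_zero_of_notMem_tsupport fun h => hs (hζT h)
  simpa only [innerForm_eq, evalForm, lam_ι_φ, Pi.zero_apply,
    zero_apply, zero_add, ContinuousLinearEquiv.symm_apply_apply] using
    integral_deriv_mul_innerH (E := E) hT hζ (hvanish 0 (by simp)) (hvanish T (by simp))
      (E.ι 0 v₀) (E.ι 0 v)

theorem norm_pullDual_Ldot_le (LD : LData E) {t : ℝ} (ht : t ∈ Icc 0 T)
    (h8 : ∀ v : V t, ‖LD.Ldot t v‖ ≤ LD.C₅ * ‖E.ι t v‖) (c : V 0) :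
    ‖E.PV.pullDual t (LD.Ldot t (E.PV.φ t c))‖
      ≤ E.PV.C * LD.C₅ * (E.PH.C * ‖E.ι 0‖) * ‖c‖ := by
  calc _ ≤ E.PV.C * ‖LD.Ldot t (E.PV.φ t c)‖ := E.PV.norm_pullDual_le_s16 ht _
    _ ≤ E.PV.C * (LD.C₅ * (E.PH.C * ‖E.ι 0‖ * ‖c‖)) :=
        mul_le_mul_of_nonneg_left ((h8 _).trans (mul_le_mul_of_nonneg_left
          (norm_ι_φ_le ht c) LD.C₅_pos.le)) E.PV.C_pos.le
    _ = _ := by ring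

theorem memL2Xstar_Ldot [CompleteSpace (V 0)] [TopologicalSpace.SeparableSpace (V 0)]
    (LD : LData E) (hT : 0 < T) {u : ∀ t, V t} (hu : E.PV.MemL2X u) :
    E.PV.MemL2Xstar (fun t => LD.Ldot t (u t)) := by
  -- `L̇` carries no measurability assumption; it comes from (L7) applied to the path
  -- `t ↦ φ_t c`, whose material derivative vanishes.
  have hconst : ∀ c : V 0, AEStronglyMeasurable
      (fun t => E.PV.pullDual t (LD.Ldot t (E.PV.φ t c))) (volume.restrict (Ioc 0 T)) := by
    intro c
    simpa only [Pi.zero_apply, map_zero, add_zero] using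
      (LD.hL7 _ 0 (memL2X_φ c) memL2Xstar_zero (iwmd_φ_zero hT c)).1.aestronglyMeasurable
  have hcont : ∀ᵐ t ∂volume.restrict (Ioc 0 T),
      Continuous fun c => E.PV.pullDual t (LD.Ldot t (E.PV.φ t c)) := by
    filter_upwards [ae_restrict_Ioc_mem_Ioo 0 T, LD.hL8] with t ht h8
    exact AddMonoidHomClass.continuous_of_bound
      (((ContinuousLinearMap.compL ℝ (V 0) (V t) ℝ).flip
        (E.PV.φ t : V 0 →L[ℝ] V t)).toLinearMap ∘ₗ LD.Ldot t ∘ₗ (E.PV.φ t).toLinearMap) _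
      (norm_pullDual_Ldot_le LD (Ioo_subset_Icc_self ht) h8)
  refine MemLp.of_le_mul (c := E.PV.C * LD.C₅ * (E.PH.C * ‖E.ι 0‖)) hu ?_ ?_
  · simpa only [ContinuousLinearEquiv.apply_symm_apply] using
      hu.aestronglyMeasurable.comp_caratheodory hconst hcont
  · filter_upwards [ae_restrict_Ioc_mem_Ioo 0 T, LD.hL8] with t ht h8
    simpa only [ContinuousLinearEquiv.apply_symm_apply] using
      norm_pullDual_Ldot_le LD (Ioo_subset_Icc_self ht) h8 ((E.PV.φ t).symm (u t))

theorem IWMD.congr_ae {w : ∀ t, V t} {G₁ G₂ : ∀ t, StrongDual ℝ (V t)} (h : E.IWMD w G₁)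
    (hG : ∀ᵐ t ∂volume.restrict (Ioc 0 T), G₁ t = G₂ t) : E.IWMD w G₂ := by
  intro η₀ hη hηT
  rw [← h η₀ hη hηT]
  refine integral_congr_ae ?_
  filter_upwards [hG] with t ht
  rw [ht]

theorem IWMD.ae_eq {w : ∀ t, V t} {G₁ G₂ : ∀ t, StrongDual ℝ (V t)}
    (hG₁ : E.PV.MemL2Xstar G₁) (hG₂ : E.PV.MemL2Xstar G₂) (h₁ : E.IWMD w G₁)
    (h₂ : E.IWMD w G₂) : ∀ᵐ t ∂volume.restrict (Ioc 0 T), G₁ t = G₂ t := by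
  have hint : ∀ {G : ∀ t, StrongDual ℝ (V t)}, E.PV.MemL2Xstar G →
      Integrable (fun t => E.PV.pullDual t (G t)) (volume.restrict (Ioc 0 T)) :=
    fun hG => hG.integrable one_le_two
  have hzero : ∀ᵐ t ∂volume.restrict (Ioc 0 T),
      t ∈ Ioo 0 T → E.PV.pullDual t (G₁ t) - E.PV.pullDual t (G₂ t) = 0 := by
    refine isOpen_Ioo.ae_eq_zero_of_integral_contDiff_smul_eq_zero
      (((hint hG₁).sub (hint hG₂)).locallyIntegrable.locallyIntegrableOn _)
      fun ζ hζ hζc hζT => ?_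
    obtain ⟨M, hM⟩ := hζ.continuous.bounded_above_of_compact_support hζc
    have hint' : ∀ {G : ∀ t, StrongDual ℝ (V t)}, E.PV.MemL2Xstar G →
        Integrable (fun t => ζ t • E.PV.pullDual t (G t)) (volume.restrict (Ioc 0 T)) :=
      fun hG => (hint hG).bdd_smul M hζ.continuous.aestronglyMeasurable (ae_of_all _ hM)
    have hsmul : ∀ {G : ∀ t, StrongDual ℝ (V t)}, E.PV.MemL2Xstar G → ∀ v,
        (∫ t in Ioc 0 T, ζ t • E.PV.pullDual t (G t)) v
          = ∫ t in Ioc 0 T, G t (E.PV.φ t (ζ t • v)) := fun hG v => by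
      rw [ContinuousLinearMap.integral_apply (hint' hG)]
      simp [CompatiblePair.pullDual]
    ext v
    have hη : ContDiff ℝ (⊤ : ℕ∞) (fun t => ζ t • v) := hζ.smul contDiff_const
    have hηT := (tsupport_smul_subset_left ζ fun _ => v).trans hζT
    simp only [smul_sub]
    rw [integral_sub (hint' hG₁) (hint' hG₂), sub_apply, hsmul hG₁,
      hsmul hG₂, h₁ _ hη hηT, h₂ _ hη hηT, sub_self, zero_apply]
  filter_upwards [hzero, ae_restrict_Ioc_mem_Ioo 0 T] with t h ht
  exact E.PV.pullDual_injective t (sub_eq_zero.1 (h ht))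

end EvolvingGelfand

theorem stmt16_general (T : ℝ) (hT : 0 < T) (V H : ℝ → Type*)
    [∀ t, NormedAddCommGroup (V t)] [∀ t, InnerProductSpace ℝ (V t)]
    [∀ t, NormedAddCommGroup (H t)] [∀ t, InnerProductSpace ℝ (H t)]
    [∀ t, CompleteSpace (V t)] [∀ t, TopologicalSpace.SeparableSpace (V t)]
    (E : EvolvingGelfand T V H)
    (LD : LData E)
    (u : ∀ t, V t) (hu : E.PV.MemL2X u)
    (g : ∀ t, StrongDual ℝ (V t)) (hg : E.PV.MemL2Xstar g) :
    -- `∂•u` exists in `L²_{V*}` with `L(t)∂•u(t) = g(t)` a.e.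
    (∃ g' : ∀ t, StrongDual ℝ (V t), E.PV.MemL2Xstar g' ∧ E.IWMD u g' ∧
        ∀ᵐ t ∂(volume.restrict (Ioc (0:ℝ) T)), LD.Lstar t (g' t) = g t)
    ↔
    -- iff for every `v₀ ∈ V₀`,
    -- `(d/dt)(L(t)u(t), φ_t v₀)_{H(t)} = ⟨g(t) + M(t)u(t), φ_t v₀⟩` weakly in `(0,T)`,
    -- where `⟨M(t)v, w⟩ = ⟨L̇(t)v, w⟩ + λ(t; L(t)v, w)`
    (∀ v₀ : V 0, ∀ ζ : ℝ → ℝ, ContDiff ℝ (⊤ : ℕ∞) ζ → tsupport ζ ⊆ Ioo (0:ℝ) T →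
      (∫ t in Ioc (0:ℝ) T, deriv ζ t *
          (inner ℝ (E.ι t (LD.LV t (u t))) (E.ι t (E.PV.φ t v₀)) : ℝ))
        = -∫ t in Ioc (0:ℝ) T, ζ t *
            (g t (E.PV.φ t v₀)
              + (LD.Ldot t (u t) (E.PV.φ t v₀)
                + E.lam t (E.ι t (LD.LV t (u t))) (E.ι t (E.PV.φ t v₀))))) := by
  have hG : E.PV.MemL2Xstar (fun t => g t + LD.Ldot t (u t)) :=
    EvolvingGelfand.memL2Xstar_add hg (EvolvingGelfand.memL2Xstar_Ldot LD hT hu)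
  have hweak := EvolvingGelfand.iwmd_iff_forall_smul hT (LD.hL5 u hu) hG
  simp only [EvolvingGelfand.innerForm, EvolvingGelfand.evalForm, add_apply, add_assoc] at hweak
  rw [← hweak]
  constructor
  · rintro ⟨g', hg', hu', hLg'⟩
    refine (LD.hL7 u g' hu hg' hu').2.congr_ae ?_
    filter_upwards [hLg'] with t ht
    rw [ht, add_comm]
  · intro hLu
    obtain ⟨g', hg', hu'⟩ := (LD.hL6 u hu).2 ⟨_, hG, hLu⟩
    obtain ⟨hG', hLu'⟩ := LD.hL7 u g' hu hg' hu'
    refine ⟨g', hg', hu', ?_⟩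
    filter_upwards [hLu'.ae_eq hG' hG hLu] with t ht
    exact add_left_cancel (ht.trans (add_comm _ _))

theorem stmt16 (T : ℝ) (hT : 0 < T) (V H : ℝ → Type*)
    [∀ t, NormedAddCommGroup (V t)] [∀ t, InnerProductSpace ℝ (V t)]
    [∀ t, NormedAddCommGroup (H t)] [∀ t, InnerProductSpace ℝ (H t)]
    [∀ t, CompleteSpace (V t)] [∀ t, TopologicalSpace.SeparableSpace (V t)]
    [∀ t, CompleteSpace (H t)] [∀ t, TopologicalSpace.SeparableSpace (H t)]
    (E : EvolvingGelfand T V H)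
    (hESE : E.ESE)
    (LD : LData E)
    (u : ∀ t, V t) (hu : E.PV.MemL2X u)
    (g : ∀ t, StrongDual ℝ (V t)) (hg : E.PV.MemL2Xstar g) :
    -- `∂•u` exists in `L²_{V*}` with `L(t)∂•u(t) = g(t)` a.e.
    (∃ g' : ∀ t, StrongDual ℝ (V t), E.PV.MemL2Xstar g' ∧ E.IWMD u g' ∧
        ∀ᵐ t ∂(volume.restrict (Ioc (0:ℝ) T)), LD.Lstar t (g' t) = g t)
    ↔
    -- iff for every `v₀ ∈ V₀`,
    -- `(d/dt)(L(t)u(t), φ_t v₀)_{H(t)} = ⟨g(t) + M(t)u(t), φ_t v₀⟩` weakly in `(0,T)`,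
    -- where `⟨M(t)v, w⟩ = ⟨L̇(t)v, w⟩ + λ(t; L(t)v, w)`
    (∀ v₀ : V 0, ∀ ζ : ℝ → ℝ, ContDiff ℝ (⊤ : ℕ∞) ζ → tsupport ζ ⊆ Ioo (0:ℝ) T →
      (∫ t in Ioc (0:ℝ) T, deriv ζ t *
          (inner ℝ (E.ι t (LD.LV t (u t))) (E.ι t (E.PV.φ t v₀)) : ℝ))
        = -∫ t in Ioc (0:ℝ) T, ζ t *
            (g t (E.PV.φ t v₀)
              + (LD.Ldot t (u t) (E.PV.φ t v₀)
                + E.lam t (E.ι t (LD.LV t (u t))) (E.ι t (E.PV.φ t v₀))))) :=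
  stmt16_general T hT V H E LD u hu g hg
end
end
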